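/- arXiv:2105.07278 — 9 statements merged into one kernel-verified Lean document; each statement's English description precedes it below -/
import Mathlib

section
/- The map L : Π(μ,ν) → F(μ,ν), π ↦ ((p_{X×Y₁})_# π, (p_{X₂×Y})_# π), is surjective: every cardinal flow between μ and ν arises as L(π) for some coupling π of μ and ν. -/
open MeasureTheory ProbabilityTheory
open scoped ENNReal ProbabilityTheory

noncomputable section

variable {X₁ X₂ Y₁ Y₂ : Type*} [MeasurableSpace X₁] [MeasurableSpace X₂]
  [MeasurableSpace Y₁] [MeasurableSpace Y₂]

/-- `π` is a transportation plan (coupling) between `μ` and `ν`. -/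
def IsCoupling {A B : Type*} [MeasurableSpace A] [MeasurableSpace B]
    (π : Measure (A × B)) (μ : Measure A) (ν : Measure B) : Prop :=
  π.map Prod.fst = μ ∧ π.map Prod.snd = ν

/-- The minimal transportation (Wasserstein) cost for the cost `c`. -/
noncomputable def Wc {A B : Type*} [MeasurableSpace A] [MeasurableSpace B]
    (c : A → B → ℝ≥0∞) (μ : Measure A) (ν : Measure B) : ℝ≥0∞ :=
  ⨅ π ∈ {π : Measure (A × B) | IsCoupling π μ ν}, ∫⁻ p, c p.1 p.2 ∂π

/-- `(f1, f2)` is a cardinal flow between `μ ∈ P(X₁ × X₂)` and `ν ∈ P(Y₁ × Y₂)`: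
the marginal of `f1` on `X = X₁ × X₂` is `μ`, the marginal of `f2` on `Y = Y₁ × Y₂` is `ν`,
and `f1`, `f2` have the same marginal on `Y₁ × X₂`. -/
def IsCardinalFlow (μ : Measure (X₁ × X₂)) (ν : Measure (Y₁ × Y₂))
    (f1 : Measure ((X₁ × X₂) × Y₁)) (f2 : Measure (X₂ × (Y₁ × Y₂))) : Prop :=
  f1.map Prod.fst = μ ∧ f2.map Prod.snd = ν ∧
    f1.map (fun p => (p.2, p.1.2)) = f2.map (fun p => (p.2.1, p.1))

/-- The set of cardinal flows between `μ` and `ν`. -/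
def Flows (μ : Measure (X₁ × X₂)) (ν : Measure (Y₁ × Y₂)) :
    Set (Measure ((X₁ × X₂) × Y₁) × Measure (X₂ × (Y₁ × Y₂))) :=
  {F | IsProbabilityMeasure F.1 ∧ IsProbabilityMeasure F.2 ∧ IsCardinalFlow μ ν F.1 F.2}

/-- The cardinal flow functional `CT(f¹,f²) = ∫ c₁ df¹ + ∫ c₂ df²`. -/
noncomputable def CT (c₁ : X₁ → Y₁ → ℝ≥0∞) (c₂ : X₂ → Y₂ → ℝ≥0∞)
    (F : Measure ((X₁ × X₂) × Y₁) × Measure (X₂ × (Y₁ × Y₂))) : ℝ≥0∞ :=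
  ∫⁻ q, c₁ q.1.1 q.2 ∂F.1 + ∫⁻ q, c₂ q.1 q.2.2 ∂F.2

/-- `ζ` is a pivot measure between `μ` and `ν` for the separable cost `c₁ + c₂`:
some optimal cardinal flow glues on `ζ`. -/
def IsPivot (μ : Measure (X₁ × X₂)) (ν : Measure (Y₁ × Y₂))
    (c₁ : X₁ → Y₁ → ℝ≥0∞) (c₂ : X₂ → Y₂ → ℝ≥0∞) (ζ : Measure (Y₁ × X₂)) : Prop :=
  ∃ F ∈ Flows μ ν, F.1.map (fun p => (p.2, p.1.2)) = ζ ∧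
    CT c₁ c₂ F = ⨅ G ∈ Flows μ ν, CT c₁ c₂ G

namespace MeasureTheory.Measure

variable {Z A B : Type*} [MeasurableSpace Z] [MeasurableSpace A] [MeasurableSpace B]

theorem exists_gluing_of_fst_eq [StandardBorelSpace A] [StandardBorelSpace B]
    (ρ₁ : Measure (Z × A)) (ρ₂ : Measure (Z × B)) [IsFiniteMeasure ρ₁] [IsFiniteMeasure ρ₂]
    (h : ρ₁.fst = ρ₂.fst) :
    ∃ γ : Measure (Z × (A × B)),
      γ.map (Prod.map id Prod.fst) = ρ₁ ∧ γ.map (Prod.map id Prod.snd) = ρ₂ := by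
  rcases isEmpty_or_nonempty A with hA | hA
  · have hρ₁ : ρ₁ = 0 := eq_zero_of_isEmpty ρ₁
    refine ⟨0, by simp [hρ₁], ?_⟩
    rw [hρ₁, fst_zero, eq_comm, fst, map_eq_zero_iff measurable_fst.aemeasurable] at h
    simp [h]
  rcases isEmpty_or_nonempty B with hB | hB
  · have hρ₂ : ρ₂ = 0 := eq_zero_of_isEmpty ρ₂
    refine ⟨0, ?_, by simp [hρ₂]⟩
    rw [hρ₂, fst_zero, fst, map_eq_zero_iff measurable_fst.aemeasurable] at h
    simp [h]
  -- Choose the two conditional laws given `z ∈ Z` independently of each other.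
  refine ⟨ρ₁.fst ⊗ₘ (ρ₁.condKernel ×ₖ ρ₂.condKernel), ?_, ?_⟩
  · rw [← compProd_map measurable_fst, ← Kernel.fst_eq, Kernel.fst_prod, disintegrate]
  · rw [← compProd_map measurable_snd, ← Kernel.snd_eq, Kernel.snd_prod, h, disintegrate]

theorem map_map_of_leftInverse {α β : Type*} [MeasurableSpace α] [MeasurableSpace β]
    {f : α → β} {g : β → α} (hf : Measurable f) (hg : Measurable g)
    (hgf : Function.LeftInverse g f) (μ : Measure α) : (μ.map f).map g = μ := by
  rw [map_map hg hf, hgf.comp_eq_id, map_id]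

end MeasureTheory.Measure

theorem stmt2_general
    [TopologicalSpace X₁] [PolishSpace X₁] [BorelSpace X₁]
    [TopologicalSpace Y₂] [PolishSpace Y₂] [BorelSpace Y₂]
    (μ : Measure (X₁ × X₂)) (ν : Measure (Y₁ × Y₂))
    (f1 : Measure ((X₁ × X₂) × Y₁)) (f2 : Measure (X₂ × (Y₁ × Y₂)))
    (hF : (f1, f2) ∈ Flows μ ν) :
    ∃ π : Measure ((X₁ × X₂) × (Y₁ × Y₂)), IsCoupling π μ ν ∧
      π.map (fun p => (p.1, p.2.1)) = f1 ∧ π.map (fun p => (p.1.2, p.2)) = f2 := by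
  obtain ⟨_, _, hμ, hν, hζ⟩ :
      IsProbabilityMeasure f1 ∧ IsProbabilityMeasure f2 ∧ IsCardinalFlow μ ν f1 f2 := hF
  -- Both flows, rearranged as measures over their common marginal on `Y₁ × X₂`.
  obtain ⟨γ, hγ₁, hγ₂⟩ := Measure.exists_gluing_of_fst_eq
    (f1.map fun p => ((p.2, p.1.2), p.1.1)) (f2.map fun p => ((p.2.1, p.1), p.2.2)) (by
      rw [Measure.fst_map_prodMk (by fun_prop), Measure.fst_map_prodMk (by fun_prop)]
      exact hζ)
  set π := γ.map fun q => ((q.2.1, q.1.2), (q.1.1, q.2.2))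
  have hπ₁ : π.map (fun p => (p.1, p.2.1)) = f1 :=
    calc _ = ((γ.map (Prod.map id Prod.fst)).map fun r => ((r.2, r.1.2), r.1.1)) := by
          rw [Measure.map_map (by fun_prop) (by fun_prop),
            Measure.map_map (by fun_prop) (by fun_prop)]
          rfl
      _ = f1 := by
          rw [hγ₁, Measure.map_map_of_leftInverse (by fun_prop) (by fun_prop) (fun _ => rfl)]
  have hπ₂ : π.map (fun p => (p.1.2, p.2)) = f2 :=
    calc _ = ((γ.map (Prod.map id Prod.snd)).map fun r => (r.1.2, (r.1.1, r.2))) := by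
          rw [Measure.map_map (by fun_prop) (by fun_prop),
            Measure.map_map (by fun_prop) (by fun_prop)]
          rfl
      _ = f2 := by
          rw [hγ₂, Measure.map_map_of_leftInverse (by fun_prop) (by fun_prop) (fun _ => rfl)]
  refine ⟨π, ⟨?_, ?_⟩, hπ₁, hπ₂⟩
  · rw [← hμ, ← hπ₁]
    exact (Measure.fst_map_prodMk (by fun_prop)).symm
  · rw [← hν, ← hπ₂]
    exact (Measure.snd_map_prodMk (by fun_prop)).symm

theorem stmt2
    [TopologicalSpace X₁] [PolishSpace X₁] [BorelSpace X₁]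
    [TopologicalSpace X₂] [PolishSpace X₂] [BorelSpace X₂]
    [TopologicalSpace Y₁] [PolishSpace Y₁] [BorelSpace Y₁]
    [TopologicalSpace Y₂] [PolishSpace Y₂] [BorelSpace Y₂]
    (μ : Measure (X₁ × X₂)) (ν : Measure (Y₁ × Y₂))
    [IsProbabilityMeasure μ] [IsProbabilityMeasure ν]
    (f1 : Measure ((X₁ × X₂) × Y₁)) (f2 : Measure (X₂ × (Y₁ × Y₂)))
    (hF : (f1, f2) ∈ Flows μ ν) :
    ∃ π : Measure ((X₁ × X₂) × (Y₁ × Y₂)), IsCoupling π μ ν ∧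
      π.map (fun p => (p.1, p.2.1)) = f1 ∧ π.map (fun p => (p.1.2, p.2)) = f2 :=
  stmt2_general μ ν f1 f2 hF
end
end

section
/- For a separable nonnegative lower semicontinuous cost c = c₁ + c₂, the minimal transport cost equals the minimal cardinal flow cost: inf over couplings π ∈ Π(μ,ν) of ∫ c dπ equals inf over cardinal flows (f¹,f²) ∈ F(μ,ν) of ∫ c₁ df¹ + ∫ c₂ df². -/
open MeasureTheory ProbabilityTheory
open scoped ENNReal ProbabilityTheory

noncomputable section

variable {X₁ X₂ Y₁ Y₂ : Type*} [MeasurableSpace X₁] [MeasurableSpace X₂]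
  [MeasurableSpace Y₁] [MeasurableSpace Y₂]

lemma map_compProd_fst_aux {α β γ : Type*} [MeasurableSpace α] [MeasurableSpace β]
    [MeasurableSpace γ] (μ : Measure α) [SFinite μ] (κ : Kernel α (β × γ))
    [IsSFiniteKernel κ] :
    (μ ⊗ₘ κ).map (Prod.map id Prod.fst) = μ ⊗ₘ κ.fst := by
  ext s hs
  rw [Measure.map_apply (measurable_id.prodMap measurable_fst) hs,
    Measure.compProd_apply hs,
    Measure.compProd_apply (measurable_id.prodMap measurable_fst hs)]
  congr with a
  rw [Kernel.fst_apply' _ _ (measurable_prodMk_left hs)]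
  rfl

lemma map_compProd_snd_aux {α β γ : Type*} [MeasurableSpace α] [MeasurableSpace β]
    [MeasurableSpace γ] (μ : Measure α) [SFinite μ] (κ : Kernel α (β × γ))
    [IsSFiniteKernel κ] :
    (μ ⊗ₘ κ).map (Prod.map id Prod.snd) = μ ⊗ₘ κ.snd := by
  ext s hs
  rw [Measure.map_apply (measurable_id.prodMap measurable_snd) hs,
    Measure.compProd_apply hs,
    Measure.compProd_apply (measurable_id.prodMap measurable_snd hs)]
  congr with a
  rw [Kernel.snd_apply' _ _ (measurable_prodMk_left hs)]
  rfl

def flowOfPlan (π : Measure ((X₁ × X₂) × (Y₁ × Y₂))) :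
    Measure ((X₁ × X₂) × Y₁) × Measure (X₂ × (Y₁ × Y₂)) :=
  (π.map fun p => (p.1, p.2.1), π.map fun p => (p.1.2, p.2))

theorem isCardinalFlow_flowOfPlan_iff {μ : Measure (X₁ × X₂)} {ν : Measure (Y₁ × Y₂)}
    {π : Measure ((X₁ × X₂) × (Y₁ × Y₂))} :
    IsCardinalFlow μ ν (flowOfPlan π).1 (flowOfPlan π).2 ↔ IsCoupling π μ ν := by
  simp only [IsCardinalFlow, IsCoupling, flowOfPlan]
  rw [Measure.map_map (by fun_prop) (by fun_prop), Measure.map_map (by fun_prop) (by fun_prop),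
    Measure.map_map (by fun_prop) (by fun_prop), Measure.map_map (by fun_prop) (by fun_prop)]
  exact ⟨fun h => ⟨h.1, h.2.1⟩, fun h => ⟨h.1, h.2, rfl⟩⟩

theorem flowOfPlan_mem_flows {μ : Measure (X₁ × X₂)} {ν : Measure (Y₁ × Y₂)}
    [IsProbabilityMeasure μ] {π : Measure ((X₁ × X₂) × (Y₁ × Y₂))} (hπ : IsCoupling π μ ν) :
    flowOfPlan π ∈ Flows μ ν := by
  have : IsProbabilityMeasure (π.map Prod.fst) := by rw [hπ.1]; infer_instance
  have := Measure.isProbabilityMeasure_of_map (μ := π) Prod.fst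
  exact ⟨Measure.isProbabilityMeasure_map (by fun_prop),
    Measure.isProbabilityMeasure_map (by fun_prop),
    isCardinalFlow_flowOfPlan_iff.2 hπ⟩

theorem lintegral_add_eq_CT_flowOfPlan {c₁ : X₁ → Y₁ → ℝ≥0∞} {c₂ : X₂ → Y₂ → ℝ≥0∞}
    (hc₁ : Measurable fun p : X₁ × Y₁ => c₁ p.1 p.2)
    (hc₂ : Measurable fun p : X₂ × Y₂ => c₂ p.1 p.2) (π : Measure ((X₁ × X₂) × (Y₁ × Y₂))) :
    ∫⁻ p, c₁ p.1.1 p.2.1 + c₂ p.1.2 p.2.2 ∂π = CT c₁ c₂ (flowOfPlan π) := by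
  have h₁ : Measurable fun q : (X₁ × X₂) × Y₁ => c₁ q.1.1 q.2 := by fun_prop
  have h₂ : Measurable fun q : X₂ × (Y₁ × Y₂) => c₂ q.1 q.2.2 := by fun_prop
  dsimp only [CT, flowOfPlan]
  rw [lintegral_map h₁ (by fun_prop), lintegral_map h₂ (by fun_prop)]
  exact lintegral_add_left (by fun_prop) _

theorem exists_flowOfPlan_eq [StandardBorelSpace X₁] [StandardBorelSpace Y₂]
    (F : Measure ((X₁ × X₂) × Y₁) × Measure (X₂ × (Y₁ × Y₂)))
    [IsFiniteMeasure F.1] [IsFiniteMeasure F.2]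
    (h : F.1.map (fun p => (p.2, p.1.2)) = F.2.map (fun p => (p.2.1, p.1))) :
    ∃ π, flowOfPlan π = F := by
  set ρ₁ := F.1.map fun p => ((p.2, p.1.2), p.1.1)
  set ρ₂ := F.2.map fun p => ((p.2.1, p.1), p.2.2)
  have hρ : ρ₁.fst = ρ₂.fst := by
    rwa [Measure.fst, Measure.fst, Measure.map_map (by fun_prop) (by fun_prop),
      Measure.map_map (by fun_prop) (by fun_prop)]
  obtain ⟨γ, hγ₁, hγ₂⟩ := Measure.exists_gluing_of_fst_eq ρ₁ ρ₂ hρ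
  refine ⟨γ.map fun q => ((q.2.1, q.1.2), (q.1.1, q.2.2)), Prod.ext ?_ ?_⟩
  · calc (flowOfPlan _).1
        = (γ.map (Prod.map id Prod.fst)).map fun r => ((r.2, r.1.2), r.1.1) := by
          dsimp only [flowOfPlan]
          rw [Measure.map_map (by fun_prop) (by fun_prop),
            Measure.map_map (by fun_prop) (by fun_prop)]
          rfl
      _ = F.1 := by
          rw [hγ₁, Measure.map_map (by fun_prop) (by fun_prop)]
          exact Measure.map_id
  · calc (flowOfPlan _).2
        = (γ.map (Prod.map id Prod.snd)).map fun r => (r.1.2, (r.1.1, r.2)) := by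
          dsimp only [flowOfPlan]
          rw [Measure.map_map (by fun_prop) (by fun_prop),
            Measure.map_map (by fun_prop) (by fun_prop)]
          rfl
      _ = F.2 := by
          rw [hγ₂, Measure.map_map (by fun_prop) (by fun_prop)]
          exact Measure.map_id

theorem stmt4_general
    [TopologicalSpace X₁] [PolishSpace X₁] [BorelSpace X₁]
    [TopologicalSpace X₂] [BorelSpace X₂]
    [TopologicalSpace Y₁] [BorelSpace Y₁]
    [TopologicalSpace Y₂] [PolishSpace Y₂] [BorelSpace Y₂]
    (μ : Measure (X₁ × X₂)) (ν : Measure (Y₁ × Y₂))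
    [IsProbabilityMeasure μ]
    (c₁ : X₁ → Y₁ → ℝ≥0∞) (c₂ : X₂ → Y₂ → ℝ≥0∞)
    (hc₁ : LowerSemicontinuous fun p : X₁ × Y₁ => c₁ p.1 p.2)
    (hc₂ : LowerSemicontinuous fun p : X₂ × Y₂ => c₂ p.1 p.2) :
    Wc (fun x y => c₁ x.1 y.1 + c₂ x.2 y.2) μ ν = ⨅ F ∈ Flows μ ν, CT c₁ c₂ F := by
  have hcost := lintegral_add_eq_CT_flowOfPlan hc₁.measurable hc₂.measurable
  apply le_antisymm
  · refine le_iInf₂ fun F ⟨_, _, hF⟩ => ?_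
    obtain ⟨π, rfl⟩ := exists_flowOfPlan_eq F hF.2.2
    rw [← hcost]
    exact iInf₂_le π (isCardinalFlow_flowOfPlan_iff.1 hF : IsCoupling π μ ν)
  · refine le_iInf₂ fun π hπ => ?_
    rw [hcost]
    exact iInf₂_le _ (flowOfPlan_mem_flows hπ)

theorem stmt4
    [TopologicalSpace X₁] [PolishSpace X₁] [BorelSpace X₁]
    [TopologicalSpace X₂] [PolishSpace X₂] [BorelSpace X₂]
    [TopologicalSpace Y₁] [PolishSpace Y₁] [BorelSpace Y₁]
    [TopologicalSpace Y₂] [PolishSpace Y₂] [BorelSpace Y₂]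
    (μ : Measure (X₁ × X₂)) (ν : Measure (Y₁ × Y₂))
    [IsProbabilityMeasure μ] [IsProbabilityMeasure ν]
    (c₁ : X₁ → Y₁ → ℝ≥0∞) (c₂ : X₂ → Y₂ → ℝ≥0∞)
    (hc₁ : LowerSemicontinuous fun p : X₁ × Y₁ => c₁ p.1 p.2)
    (hc₂ : LowerSemicontinuous fun p : X₂ × Y₂ => c₂ p.1 p.2) :
    Wc (fun x y => c₁ x.1 y.1 + c₂ x.2 y.2) μ ν = ⨅ F ∈ Flows μ ν, CT c₁ c₂ F :=
  stmt4_general μ ν c₁ c₂ hc₁ hc₂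
end
end

section
/- For every intermedium measure λ ∈ I(μ,ν), there exists a cardinal flow (f¹,f²) ∈ F(μ,ν) that glues on λ; explicitly, f¹ = (λ_{|x₂} ⊗ μ_{|x₂}) ⊗ μ₂ and f² = (λ_{|y₁} ⊗ ν_{|y₁}) ⊗ ν₁ works, where λ_{|x₂}, μ_{|x₂}, λ_{|y₁}, ν_{|y₁} denote disintegrations (conditional laws). -/
open MeasureTheory ProbabilityTheory
open scoped ENNReal ProbabilityTheory

noncomputable section

variable {X₁ X₂ Y₁ Y₂ : Type*} [MeasurableSpace X₁] [MeasurableSpace X₂]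
  [MeasurableSpace Y₁] [MeasurableSpace Y₂]

/-! Both flows come from the gluing lemma for couplings. `f¹` glues `μ` and `λ` along their common
`X₂`-marginal, drawing `x₁` and `y₁` independently from the conditional laws given `x₂`; `f²` glues
`λ` and `ν` along their common `Y₁`-marginal in the same way. A glued measure has both glued
measures as marginals, so `f¹` and `f²` both project to `λ` on `Y₁ × X₂`. -/

namespace MeasureTheory.Measure

variable {α β γ : Type*} [MeasurableSpace α] [MeasurableSpace β] [MeasurableSpace γ]

lemma map_swap_map_swap (ρ : Measure (α × β)) : (ρ.map Prod.swap).map Prod.swap = ρ := by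
  rw [map_map measurable_swap measurable_swap, Prod.swap_swap_eq, map_id]

lemma compProd_prod_map_fst (μ : Measure α) [SFinite μ] (κ : Kernel α β) [IsSFiniteKernel κ]
    (η : Kernel α γ) [IsMarkovKernel η] :
    (μ ⊗ₘ (κ ×ₖ η)).map (Prod.map id Prod.fst) = μ ⊗ₘ κ := by
  rw [← compProd_map measurable_fst, ← Kernel.fst_eq, Kernel.fst_prod]

lemma compProd_prod_map_snd (μ : Measure α) [SFinite μ] (κ : Kernel α β) [IsMarkovKernel κ]
    (η : Kernel α γ) [IsSFiniteKernel η] :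
    (μ ⊗ₘ (κ ×ₖ η)).map (Prod.map id Prod.snd) = μ ⊗ₘ η := by
  rw [← compProd_map measurable_snd, ← Kernel.snd_eq, Kernel.snd_prod]

variable [StandardBorelSpace β] [Nonempty β] [StandardBorelSpace γ] [Nonempty γ]

def glue (ρ : Measure (α × β)) [IsFiniteMeasure ρ] (σ : Measure (α × γ)) [IsFiniteMeasure σ] :
    Measure (α × β × γ) :=
  ρ.fst ⊗ₘ (ρ.condKernel ×ₖ σ.condKernel)

variable (ρ : Measure (α × β)) [IsFiniteMeasure ρ] (σ : Measure (α × γ)) [IsFiniteMeasure σ]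

instance [IsProbabilityMeasure ρ] : IsProbabilityMeasure (glue ρ σ) := by
  unfold glue; infer_instance

lemma glue_map_fst : (glue ρ σ).map (Prod.map id Prod.fst) = ρ := by
  rw [glue, compProd_prod_map_fst, disintegrate]

lemma glue_map_snd (h : ρ.fst = σ.fst) : (glue ρ σ).map (Prod.map id Prod.snd) = σ := by
  rw [glue, compProd_prod_map_snd, h, disintegrate]

end MeasureTheory.Measure

open Measure

section FlowFst

variable [StandardBorelSpace X₁] [Nonempty X₁] [StandardBorelSpace Y₁] [Nonempty Y₁]
  (μ : Measure (X₁ × X₂)) [IsFiniteMeasure μ] (lam : Measure (Y₁ × X₂)) [IsFiniteMeasure lam]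

/-- `f¹ = (λ_{|x₂} ⊗ μ_{|x₂}) ⊗ μ₂`, with the coordinates put in the order `((x₁, x₂), y₁)`. -/
def flowFst : Measure ((X₁ × X₂) × Y₁) :=
  (glue (μ.map Prod.swap) (lam.map Prod.swap)).map fun p => ((p.2.1, p.1), p.2.2)

instance [IsProbabilityMeasure μ] : IsProbabilityMeasure (flowFst μ lam) := by
  have := isProbabilityMeasure_map (μ := μ) measurable_swap.aemeasurable
  exact isProbabilityMeasure_map (by fun_prop)

lemma flowFst_map_fst : (flowFst μ lam).map Prod.fst = μ :=
  calc (flowFst μ lam).map Prod.fst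
      = ((glue (μ.map Prod.swap) (lam.map Prod.swap)).map (Prod.map id Prod.fst)).map
          Prod.swap := by
        rw [flowFst, map_map measurable_fst (by fun_prop), map_map measurable_swap (by fun_prop)]
        rfl
    _ = μ := by rw [glue_map_fst, map_swap_map_swap]

lemma flowFst_map_glue (hl₂ : lam.map Prod.snd = μ.map Prod.snd) :
    (flowFst μ lam).map (fun p => (p.2, p.1.2)) = lam := by
  have hfst : (μ.map Prod.swap).fst = (lam.map Prod.swap).fst := by
    rw [fst_map_swap, fst_map_swap]
    exact hl₂.symm
  calc (flowFst μ lam).map (fun p => (p.2, p.1.2))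
      = ((glue (μ.map Prod.swap) (lam.map Prod.swap)).map (Prod.map id Prod.snd)).map
          Prod.swap := by
        rw [flowFst, map_map (by fun_prop) (by fun_prop), map_map measurable_swap (by fun_prop)]
        rfl
    _ = lam := by rw [glue_map_snd _ _ hfst, map_swap_map_swap]

end FlowFst

section FlowSnd

variable [StandardBorelSpace X₂] [Nonempty X₂] [StandardBorelSpace Y₂] [Nonempty Y₂]
  (ν : Measure (Y₁ × Y₂)) [IsFiniteMeasure ν] (lam : Measure (Y₁ × X₂)) [IsFiniteMeasure lam]

/-- `f² = (λ_{|y₁} ⊗ ν_{|y₁}) ⊗ ν₁`, with the coordinates put in the order `(x₂, (y₁, y₂))`. -/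
def flowSnd : Measure (X₂ × (Y₁ × Y₂)) :=
  (glue lam ν).map fun p => (p.2.1, (p.1, p.2.2))

instance [IsProbabilityMeasure lam] : IsProbabilityMeasure (flowSnd ν lam) :=
  isProbabilityMeasure_map (by fun_prop)

lemma flowSnd_map_snd (hl₁ : lam.map Prod.fst = ν.map Prod.fst) :
    (flowSnd ν lam).map Prod.snd = ν := by
  rw [flowSnd, map_map measurable_snd (by fun_prop)]
  exact glue_map_snd lam ν hl₁

lemma flowSnd_map_glue : (flowSnd ν lam).map (fun p => (p.2.1, p.1)) = lam := by
  rw [flowSnd, map_map (by fun_prop) (by fun_prop)]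
  exact glue_map_fst lam ν

end FlowSnd

theorem stmt7
    [StandardBorelSpace X₁] [Nonempty X₁] [StandardBorelSpace X₂] [Nonempty X₂]
    [StandardBorelSpace Y₁] [Nonempty Y₁] [StandardBorelSpace Y₂] [Nonempty Y₂]
    (μ : Measure (X₁ × X₂)) (ν : Measure (Y₁ × Y₂))
    [IsProbabilityMeasure μ] [IsProbabilityMeasure ν]
    (lam : Measure (Y₁ × X₂)) [IsProbabilityMeasure lam]
    (hl₂ : lam.map Prod.snd = μ.map Prod.snd) (hl₁ : lam.map Prod.fst = ν.map Prod.fst) :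
    ∃ (f1 : Measure ((X₁ × X₂) × Y₁)) (f2 : Measure (X₂ × (Y₁ × Y₂))),
      IsProbabilityMeasure f1 ∧ IsProbabilityMeasure f2 ∧
      IsCardinalFlow μ ν f1 f2 ∧ f1.map (fun p => (p.2, p.1.2)) = lam := by
  have hglue₁ := flowFst_map_glue μ lam hl₂
  have hglue₂ := flowSnd_map_glue ν lam
  refine ⟨flowFst μ lam, flowSnd ν lam, inferInstance, inferInstance,
    ⟨flowFst_map_fst μ lam, flowSnd_map_snd ν lam hl₁, hglue₁.trans hglue₂.symm⟩, hglue₁⟩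
end
end

section
/- Let (f¹,f²) be an optimal cardinal flow with pivot measure ζ, and let f¹_{|(x₂,y₁)}, f²_{|(x₂,y₁)} be the disintegrations of f¹ and f² with respect to ζ. Then for any measurable family γ_{(x₂,y₁)} of couplings of f¹_{|(x₂,y₁)} and f²_{|(x₂,y₁)}, the measure π := γ_{(x₂,y₁)} ⊗ ζ is an optimal transportation plan between μ and ν. In particular π := (f¹_{|(x₂,y₁)} ⊗ f²_{|(x₂,y₁)}) ⊗ ζ is optimal. -/
open MeasureTheory ProbabilityTheory
open scoped ENNReal ProbabilityTheory

noncomputable section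

variable {X₁ X₂ Y₁ Y₂ : Type*} [MeasurableSpace X₁] [MeasurableSpace X₂]
  [MeasurableSpace Y₁] [MeasurableSpace Y₂]

lemma ext_of_lintegral' {α : Type*} [MeasurableSpace α] {μ ν : Measure α}
    (h : ∀ f : α → ℝ≥0∞, Measurable f → ∫⁻ a, f a ∂μ = ∫⁻ a, f a ∂ν) : μ = ν :=
  Measure.ext fun s hs => by
    rw [← lintegral_indicator_one hs, ← lintegral_indicator_one hs,
      h _ (measurable_one.indicator hs)]

/-- any coupling in the `Wc` infimum is a probability measure. -/
lemma isProb_of_coupling {A B : Type*} [MeasurableSpace A] [MeasurableSpace B]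
    {π : Measure (A × B)} {μ : Measure A} {ν : Measure B} [IsProbabilityMeasure μ]
    (h : IsCoupling π μ ν) : IsProbabilityMeasure π := by
  have h1 : π.map Prod.fst Set.univ = μ Set.univ := by rw [h.1]
  rw [Measure.map_apply measurable_fst MeasurableSet.univ, Set.preimage_univ] at h1
  exact ⟨h1.trans measure_univ⟩

/-- the infimum of the cardinal-flow functional is at most the transport cost. -/
lemma flows_le_Wc (μ : Measure (X₁ × X₂)) (ν : Measure (Y₁ × Y₂))
    [IsProbabilityMeasure μ] [IsProbabilityMeasure ν]
    (c₁ : X₁ → Y₁ → ℝ≥0∞) (c₂ : X₂ → Y₂ → ℝ≥0∞)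
    (hc₁ : Measurable fun p : X₁ × Y₁ => c₁ p.1 p.2)
    (hc₂ : Measurable fun p : X₂ × Y₂ => c₂ p.1 p.2) :
    (⨅ G ∈ Flows μ ν, CT c₁ c₂ G) ≤ Wc (fun x y => c₁ x.1 y.1 + c₂ x.2 y.2) μ ν := by
  refine le_iInf₂ fun π' hπ' => ?_
  have hprob : IsProbabilityMeasure π' := isProb_of_coupling hπ'
  have hm1 : Measurable fun p : (X₁ × X₂) × (Y₁ × Y₂) => (p.1, p.2.1) :=
    measurable_fst.prodMk measurable_snd.fst
  have hm2 : Measurable fun p : (X₁ × X₂) × (Y₁ × Y₂) => (p.1.2, p.2) :=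
    measurable_fst.snd.prodMk measurable_snd
  set g1 : Measure ((X₁ × X₂) × Y₁) := π'.map fun p => (p.1, p.2.1) with hg1
  set g2 : Measure (X₂ × (Y₁ × Y₂)) := π'.map fun p => (p.1.2, p.2) with hg2
  have hflow : (g1, g2) ∈ Flows μ ν := by
    refine ⟨Measure.isProbabilityMeasure_map hm1.aemeasurable,
      Measure.isProbabilityMeasure_map hm2.aemeasurable, ?_, ?_, ?_⟩
    · rw [hg1, Measure.map_map measurable_fst hm1]
      exact hπ'.1
    · rw [hg2, Measure.map_map measurable_snd hm2]
      exact hπ'.2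
    · rw [hg1, hg2,
        Measure.map_map (measurable_snd.prodMk measurable_fst.snd) hm1,
        Measure.map_map (measurable_snd.fst.prodMk measurable_fst) hm2]
      rfl
  refine le_trans (iInf₂_le (g1, g2) hflow) (le_of_eq ?_)
  have hb1 : Measurable fun q : (X₁ × X₂) × Y₁ => c₁ q.1.1 q.2 :=
    hc₁.comp (measurable_fst.fst.prodMk measurable_snd)
  have hb2 : Measurable fun q : X₂ × (Y₁ × Y₂) => c₂ q.1 q.2.2 :=
    hc₂.comp (measurable_fst.prodMk measurable_snd.snd)
  have hd1 : Measurable fun p : (X₁ × X₂) × (Y₁ × Y₂) => c₁ p.1.1 p.2.1 :=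
    hc₁.comp (measurable_fst.fst.prodMk measurable_snd.fst)
  have e1 : ∫⁻ q, c₁ q.1.1 q.2 ∂g1 = ∫⁻ p, c₁ p.1.1 p.2.1 ∂π' := by
    rw [hg1, lintegral_map hb1 hm1]
  have e2 : ∫⁻ q, c₂ q.1 q.2.2 ∂g2 = ∫⁻ p, c₂ p.1.2 p.2.2 ∂π' := by
    rw [hg2, lintegral_map hb2 hm2]
  rw [CT, e1, e2, ← lintegral_add_left hd1]

/-- Main auxiliary lemma: any measurable gluing of couplings of the conditional laws over the
pivot gives an optimal plan. -/
lemma key (μ : Measure (X₁ × X₂)) (ν : Measure (Y₁ × Y₂))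
    [IsProbabilityMeasure μ] [IsProbabilityMeasure ν]
    (c₁ : X₁ → Y₁ → ℝ≥0∞) (c₂ : X₂ → Y₂ → ℝ≥0∞)
    (hc₁ : Measurable fun p : X₁ × Y₁ => c₁ p.1 p.2)
    (hc₂ : Measurable fun p : X₂ × Y₂ => c₂ p.1 p.2)
    (f1 : Measure ((X₁ × X₂) × Y₁)) (f2 : Measure (X₂ × (Y₁ × Y₂)))
    (hF : (f1, f2) ∈ Flows μ ν)
    (hopt : CT c₁ c₂ (f1, f2) = ⨅ G ∈ Flows μ ν, CT c₁ c₂ G)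
    (ζ : Measure (Y₁ × X₂)) [IsProbabilityMeasure ζ]
    (κ1 : Kernel (Y₁ × X₂) X₁) [IsMarkovKernel κ1]
    (hκ1 : f1 = (ζ ⊗ₘ κ1).map (fun p => ((p.2, p.1.2), p.1.1)))
    (κ2 : Kernel (Y₁ × X₂) Y₂) [IsMarkovKernel κ2]
    (hκ2 : f2 = (ζ ⊗ₘ κ2).map (fun p => (p.1.2, (p.1.1, p.2))))
    (γ : Kernel (Y₁ × X₂) (X₁ × Y₂)) [IsMarkovKernel γ]
    (hγ : ∀ᵐ z ∂ζ, IsCoupling (γ z) (κ1 z) (κ2 z)) :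
    IsCoupling ((ζ ⊗ₘ γ).map (fun p => ((p.2.1, p.1.2), (p.1.1, p.2.2)))) μ ν ∧
      ∫⁻ p, c₁ p.1.1 p.2.1 + c₂ p.1.2 p.2.2
          ∂((ζ ⊗ₘ γ).map (fun p => ((p.2.1, p.1.2), (p.1.1, p.2.2))))
        = Wc (fun x y => c₁ x.1 y.1 + c₂ x.2 y.2) μ ν := by
  have hT : Measurable fun p : (Y₁ × X₂) × (X₁ × Y₂) =>
      ((p.2.1, p.1.2), (p.1.1, p.2.2)) :=
    (measurable_snd.fst.prodMk measurable_fst.snd).prodMk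
      (measurable_fst.fst.prodMk measurable_snd.snd)
  have hS1 : Measurable fun p : (Y₁ × X₂) × X₁ => ((p.2, p.1.2), p.1.1) :=
    (measurable_snd.prodMk measurable_fst.snd).prodMk measurable_fst.fst
  have hS2 : Measurable fun p : (Y₁ × X₂) × Y₂ => (p.1.2, (p.1.1, p.2)) :=
    measurable_fst.snd.prodMk (measurable_fst.fst.prodMk measurable_snd)
  set π : Measure ((X₁ × X₂) × (Y₁ × Y₂)) :=
    (ζ ⊗ₘ γ).map (fun p => ((p.2.1, p.1.2), (p.1.1, p.2.2))) with hπ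
  -- first marginal
  have hfst : π.map Prod.fst = μ := by
    have hμ : μ = f1.map Prod.fst := hF.2.2.1.symm
    rw [hπ, hμ, hκ1]
    refine ext_of_lintegral' fun h hh => ?_
    have hA : Measurable fun p : (Y₁ × X₂) × (X₁ × Y₂) => h (p.2.1, p.1.2) :=
      hh.comp (measurable_snd.fst.prodMk measurable_fst.snd)
    have hB : Measurable fun p : (Y₁ × X₂) × X₁ => h (p.2, p.1.2) :=
      hh.comp (measurable_snd.prodMk measurable_fst.snd)
    have L : ∫⁻ a, h a
        ∂(((ζ ⊗ₘ γ).map (fun p => ((p.2.1, p.1.2), (p.1.1, p.2.2)))).map Prod.fst)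
        = ∫⁻ z, ∫⁻ w, h (w.1, z.2) ∂γ z ∂ζ := by
      rw [Measure.map_map measurable_fst hT]
      exact (lintegral_map hh (measurable_fst.comp hT)).trans
        (Measure.lintegral_compProd hA)
    have R : ∫⁻ a, h a
        ∂(((ζ ⊗ₘ κ1).map (fun p => ((p.2, p.1.2), p.1.1))).map Prod.fst)
        = ∫⁻ z, ∫⁻ x, h (x, z.2) ∂κ1 z ∂ζ := by
      rw [Measure.map_map measurable_fst hS1]
      exact (lintegral_map hh (measurable_fst.comp hS1)).trans
        (Measure.lintegral_compProd hB)
    rw [L, R]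
    refine lintegral_congr_ae ?_
    filter_upwards [hγ] with z hz
    have hC : Measurable fun x : X₁ => h (x, z.2) :=
      hh.comp (measurable_id.prodMk measurable_const)
    rw [← hz.1]
    exact (lintegral_map hC measurable_fst).symm
  -- second marginal
  have hsnd : π.map Prod.snd = ν := by
    have hν : ν = f2.map Prod.snd := hF.2.2.2.1.symm
    rw [hπ, hν, hκ2]
    refine ext_of_lintegral' fun h hh => ?_
    have hA : Measurable fun p : (Y₁ × X₂) × (X₁ × Y₂) => h (p.1.1, p.2.2) :=
      hh.comp (measurable_fst.fst.prodMk measurable_snd.snd)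
    have hB : Measurable fun p : (Y₁ × X₂) × Y₂ => h (p.1.1, p.2) :=
      hh.comp (measurable_fst.fst.prodMk measurable_snd)
    have L : ∫⁻ a, h a
        ∂(((ζ ⊗ₘ γ).map (fun p => ((p.2.1, p.1.2), (p.1.1, p.2.2)))).map Prod.snd)
        = ∫⁻ z, ∫⁻ w, h (z.1, w.2) ∂γ z ∂ζ := by
      rw [Measure.map_map measurable_snd hT]
      exact (lintegral_map hh (measurable_snd.comp hT)).trans
        (Measure.lintegral_compProd hA)
    have R : ∫⁻ a, h a
        ∂(((ζ ⊗ₘ κ2).map (fun p => (p.1.2, (p.1.1, p.2)))).map Prod.snd)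
        = ∫⁻ z, ∫⁻ y, h (z.1, y) ∂κ2 z ∂ζ := by
      rw [Measure.map_map measurable_snd hS2]
      exact (lintegral_map hh (measurable_snd.comp hS2)).trans
        (Measure.lintegral_compProd hB)
    rw [L, R]
    refine lintegral_congr_ae ?_
    filter_upwards [hγ] with z hz
    have hC : Measurable fun y : Y₂ => h (z.1, y) :=
      hh.comp (measurable_const.prodMk measurable_id)
    rw [← hz.2]
    exact (lintegral_map hC measurable_snd).symm
  have hcoupling : IsCoupling π μ ν := ⟨hfst, hsnd⟩
  refine ⟨hcoupling, ?_⟩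
  -- cost of π equals CT (f1, f2)
  have hmc₁ : Measurable fun q : (X₁ × X₂) × (Y₁ × Y₂) => c₁ q.1.1 q.2.1 :=
    hc₁.comp (measurable_fst.fst.prodMk measurable_snd.fst)
  have hmc₂ : Measurable fun q : (X₁ × X₂) × (Y₁ × Y₂) => c₂ q.1.2 q.2.2 :=
    hc₂.comp (measurable_fst.snd.prodMk measurable_snd.snd)
  have ecost : ∫⁻ p, c₁ p.1.1 p.2.1 + c₂ p.1.2 p.2.2 ∂π = CT c₁ c₂ (f1, f2) := by
    rw [lintegral_add_left hmc₁, CT]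
    have hA : Measurable fun p : (Y₁ × X₂) × (X₁ × Y₂) => c₁ p.2.1 p.1.1 :=
      hc₁.comp (measurable_snd.fst.prodMk measurable_fst.fst)
    have hB : Measurable fun p : (Y₁ × X₂) × X₁ => c₁ p.2 p.1.1 :=
      hc₁.comp (measurable_snd.prodMk measurable_fst.fst)
    have hA' : Measurable fun p : (Y₁ × X₂) × (X₁ × Y₂) => c₂ p.1.2 p.2.2 :=
      hc₂.comp (measurable_fst.snd.prodMk measurable_snd.snd)
    have hB' : Measurable fun p : (Y₁ × X₂) × Y₂ => c₂ p.1.2 p.2 :=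
      hc₂.comp (measurable_fst.snd.prodMk measurable_snd)
    congr 1
    · have L : ∫⁻ p, c₁ p.1.1 p.2.1 ∂π = ∫⁻ z, ∫⁻ w, c₁ w.1 z.1 ∂γ z ∂ζ := by
        rw [hπ]
        exact (lintegral_map hmc₁ hT).trans (Measure.lintegral_compProd hA)
      have R : ∫⁻ q, c₁ q.1.1 q.2 ∂f1 = ∫⁻ z, ∫⁻ x, c₁ x z.1 ∂κ1 z ∂ζ := by
        rw [hκ1]
        have hb1 : Measurable fun q : (X₁ × X₂) × Y₁ => c₁ q.1.1 q.2 :=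
          hc₁.comp (measurable_fst.fst.prodMk measurable_snd)
        exact (lintegral_map hb1 hS1).trans (Measure.lintegral_compProd hB)
      rw [L, R]
      refine lintegral_congr_ae ?_
      filter_upwards [hγ] with z hz
      have hC : Measurable fun x : X₁ => c₁ x z.1 :=
        hc₁.comp (measurable_id.prodMk measurable_const)
      rw [← hz.1]
      exact (lintegral_map hC measurable_fst).symm
    · have L : ∫⁻ p, c₂ p.1.2 p.2.2 ∂π = ∫⁻ z, ∫⁻ w, c₂ z.2 w.2 ∂γ z ∂ζ := by
        rw [hπ]
        exact (lintegral_map hmc₂ hT).trans (Measure.lintegral_compProd hA')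
      have R : ∫⁻ q, c₂ q.1 q.2.2 ∂f2 = ∫⁻ z, ∫⁻ y, c₂ z.2 y ∂κ2 z ∂ζ := by
        rw [hκ2]
        have hb2 : Measurable fun q : X₂ × (Y₁ × Y₂) => c₂ q.1 q.2.2 :=
          hc₂.comp (measurable_fst.prodMk measurable_snd.snd)
        exact (lintegral_map hb2 hS2).trans (Measure.lintegral_compProd hB')
      rw [L, R]
      refine lintegral_congr_ae ?_
      filter_upwards [hγ] with z hz
      have hC : Measurable fun y : Y₂ => c₂ z.2 y :=
        hc₂.comp (measurable_const.prodMk measurable_id)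
      rw [← hz.2]
      exact (lintegral_map hC measurable_snd).symm
  -- optimality
  refine le_antisymm ?_ ?_
  · calc Wc (fun x y => c₁ x.1 y.1 + c₂ x.2 y.2) μ ν
        ≥ ⨅ G ∈ Flows μ ν, CT c₁ c₂ G := flows_le_Wc μ ν c₁ c₂ hc₁ hc₂
      _ = CT c₁ c₂ (f1, f2) := hopt.symm
      _ = _ := ecost.symm
  · exact iInf₂_le π hcoupling

theorem stmt10 (μ : Measure (X₁ × X₂)) (ν : Measure (Y₁ × Y₂))
    [IsProbabilityMeasure μ] [IsProbabilityMeasure ν]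
    (c₁ : X₁ → Y₁ → ℝ≥0∞) (c₂ : X₂ → Y₂ → ℝ≥0∞)
    (hc₁ : Measurable fun p : X₁ × Y₁ => c₁ p.1 p.2)
    (hc₂ : Measurable fun p : X₂ × Y₂ => c₂ p.1 p.2)
    (f1 : Measure ((X₁ × X₂) × Y₁)) (f2 : Measure (X₂ × (Y₁ × Y₂)))
    (hF : (f1, f2) ∈ Flows μ ν)
    (hopt : CT c₁ c₂ (f1, f2) = ⨅ G ∈ Flows μ ν, CT c₁ c₂ G)
    (ζ : Measure (Y₁ × X₂)) [IsProbabilityMeasure ζ]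
    (hglue : f1.map (fun p => (p.2, p.1.2)) = ζ)
    -- disintegrations of f1 and f2 with respect to ζ:
    (κ1 : Kernel (Y₁ × X₂) X₁) [IsMarkovKernel κ1]
    (hκ1 : f1 = (ζ ⊗ₘ κ1).map (fun p => ((p.2, p.1.2), p.1.1)))
    (κ2 : Kernel (Y₁ × X₂) Y₂) [IsMarkovKernel κ2]
    (hκ2 : f2 = (ζ ⊗ₘ κ2).map (fun p => (p.1.2, (p.1.1, p.2))))
    -- a measurable family of couplings of the conditional laws:
    (γ : Kernel (Y₁ × X₂) (X₁ × Y₂)) [IsMarkovKernel γ]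
    (hγ : ∀ᵐ z ∂ζ, IsCoupling (γ z) (κ1 z) (κ2 z)) :
    (IsCoupling ((ζ ⊗ₘ γ).map (fun p => ((p.2.1, p.1.2), (p.1.1, p.2.2)))) μ ν ∧
      ∫⁻ p, c₁ p.1.1 p.2.1 + c₂ p.1.2 p.2.2
          ∂((ζ ⊗ₘ γ).map (fun p => ((p.2.1, p.1.2), (p.1.1, p.2.2))))
        = Wc (fun x y => c₁ x.1 y.1 + c₂ x.2 y.2) μ ν) ∧
    -- in particular, the product of the conditional laws gives an optimal plan:
    (IsCoupling ((ζ ⊗ₘ (κ1 ×ₖ κ2)).map (fun p => ((p.2.1, p.1.2), (p.1.1, p.2.2)))) μ ν ∧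
      ∫⁻ p, c₁ p.1.1 p.2.1 + c₂ p.1.2 p.2.2
          ∂((ζ ⊗ₘ (κ1 ×ₖ κ2)).map (fun p => ((p.2.1, p.1.2), (p.1.1, p.2.2))))
        = Wc (fun x y => c₁ x.1 y.1 + c₂ x.2 y.2) μ ν) := by
  refine ⟨key μ ν c₁ c₂ hc₁ hc₂ f1 f2 hF hopt ζ κ1 hκ1 κ2 hκ2 γ hγ,
    key μ ν c₁ c₂ hc₁ hc₂ f1 f2 hF hopt ζ κ1 hκ1 κ2 hκ2 (κ1 ×ₖ κ2) ?_⟩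
  refine Filter.Eventually.of_forall fun z => ?_
  rw [IsCoupling, Kernel.prod_apply]
  constructor
  · simp [Measure.map_fst_prod]
  · simp [Measure.map_snd_prod]
end
end

section
/- Suppose the optimal transport problem between μ and ν for a separable cost c has a unique solution π, and let (X₁,X₂,Y₁,Y₂) be a random vector with law π. Then X₁ and Y₂ are conditionally independent given (X₂,Y₁), and X₂ and Y₁ are conditionally independent given (X₁,Y₂). -/
open MeasureTheory ProbabilityTheory
open scoped ENNReal ProbabilityTheory

noncomputable section

variable {X₁ X₂ Y₁ Y₂ : Type*} [MeasurableSpace X₁] [MeasurableSpace X₂]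
  [MeasurableSpace Y₁] [MeasurableSpace Y₂]

/-! Disintegrate `π` along the conditioning pair, `π = e₊(ρ ⊗ κ)`, and replace `κ` by the
product of its marginals `κ.fst ×ₖ κ.snd`. Each of `x = (x₁, x₂)` and `y = (y₁, y₂)` involves
the conditioning pair and only one coordinate drawn from `κ`, and so does each summand of the
separable cost, so the new plan has the same marginals `μ`, `ν` and the same cost as `π`. It is
therefore optimal, hence equal to `π` by uniqueness, and uniqueness of disintegrations gives
`κ = κ.fst ×ₖ κ.snd` almost everywhere. -/

namespace ProbabilityTheory

variable {Z A B : Type*} [MeasurableSpace Z] [MeasurableSpace A] [MeasurableSpace B]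

lemma map_prodMap_fst_compProd_fst_prod_snd (ρ : Measure Z) [SFinite ρ]
    (κ : Kernel Z (A × B)) [IsMarkovKernel κ] :
    (ρ ⊗ₘ (κ.fst ×ₖ κ.snd)).map (Prod.map id Prod.fst) = (ρ ⊗ₘ κ).map (Prod.map id Prod.fst) := by
  rw [← Measure.compProd_map measurable_fst, ← Measure.compProd_map measurable_fst,
    ← Kernel.fst_eq, ← Kernel.fst_eq, Kernel.fst_prod]

lemma map_prodMap_snd_compProd_fst_prod_snd (ρ : Measure Z) [SFinite ρ]
    (κ : Kernel Z (A × B)) [IsMarkovKernel κ] :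
    (ρ ⊗ₘ (κ.fst ×ₖ κ.snd)).map (Prod.map id Prod.snd) = (ρ ⊗ₘ κ).map (Prod.map id Prod.snd) := by
  rw [← Measure.compProd_map measurable_snd, ← Measure.compProd_map measurable_snd,
    ← Kernel.snd_eq, ← Kernel.snd_eq, Kernel.snd_prod]

lemma Kernel.ae_eq_fst_prod_snd_of_compProd_unique
    [MeasurableSpace.CountableOrCountablyGenerated Z (A × B)]
    (ρ : Measure Z) [IsFiniteMeasure ρ] (κ : Kernel Z (A × B)) [IsMarkovKernel κ]
    (h : ∀ m : Measure (Z × (A × B)),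
      m.map (Prod.map id Prod.fst) = (ρ ⊗ₘ κ).map (Prod.map id Prod.fst) →
      m.map (Prod.map id Prod.snd) = (ρ ⊗ₘ κ).map (Prod.map id Prod.snd) → m = ρ ⊗ₘ κ) :
    ∀ᵐ z ∂ρ, κ z = ((κ z).map Prod.fst).prod ((κ z).map Prod.snd) := by
  have hprod := h _ (map_prodMap_fst_compProd_fst_prod_snd ρ κ)
    (map_prodMap_snd_compProd_fst_prod_snd ρ κ)
  filter_upwards [Kernel.ae_eq_of_compProd_eq hprod] with z hz
  rw [Kernel.prod_apply, Kernel.fst_apply, Kernel.snd_apply] at hz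
  exact hz.symm

variable {S T W : Type*} [MeasurableSpace S] [MeasurableSpace T] [MeasurableSpace W]

lemma map_comp_prodMap_fst_eq {m m' : Measure (Z × (A × B))}
    (h : m.map (Prod.map id Prod.fst) = m'.map (Prod.map id Prod.fst))
    {f : Z × A → W} (hf : Measurable f) :
    m.map (f ∘ Prod.map id Prod.fst) = m'.map (f ∘ Prod.map id Prod.fst) := by
  rw [← Measure.map_map hf (by fun_prop), ← Measure.map_map hf (by fun_prop), h]

lemma map_comp_prodMap_snd_eq {m m' : Measure (Z × (A × B))}
    (h : m.map (Prod.map id Prod.snd) = m'.map (Prod.map id Prod.snd))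
    {f : Z × B → W} (hf : Measurable f) :
    m.map (f ∘ Prod.map id Prod.snd) = m'.map (f ∘ Prod.map id Prod.snd) := by
  rw [← Measure.map_map hf (by fun_prop), ← Measure.map_map hf (by fun_prop), h]

lemma lintegral_add_eq_of_map_prodMap_eq {m m' : Measure (Z × (A × B))}
    (hA : m.map (Prod.map id Prod.fst) = m'.map (Prod.map id Prod.fst))
    (hB : m.map (Prod.map id Prod.snd) = m'.map (Prod.map id Prod.snd))
    {f : Z × A → ℝ≥0∞} {g : Z × B → ℝ≥0∞} (hf : Measurable f) (hg : Measurable g) :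
    ∫⁻ p, f (p.1, p.2.1) + g (p.1, p.2.2) ∂m = ∫⁻ p, f (p.1, p.2.1) + g (p.1, p.2.2) ∂m' := by
  have hf' : Measurable fun p : Z × (A × B) => f (p.1, p.2.1) := hf.comp (by fun_prop)
  have hsplit : ∀ m : Measure (Z × (A × B)), ∫⁻ p, f (p.1, p.2.1) + g (p.1, p.2.2) ∂m =
      ∫⁻ q, f q ∂(m.map (Prod.map id Prod.fst)) + ∫⁻ q, g q ∂(m.map (Prod.map id Prod.snd)) :=
    fun m => by
      rw [lintegral_add_left hf', lintegral_map hf (by fun_prop), lintegral_map hg (by fun_prop)]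
      rfl
  rw [hsplit, hsplit, hA, hB]

theorem ae_eq_fst_prod_snd_of_unique_optimal
    [MeasurableSpace.CountableOrCountablyGenerated Z (A × B)]
    {c : S → T → ℝ≥0∞} {μ : Measure S} {ν : Measure T} {π : Measure (S × T)}
    (hπ : IsCoupling π μ ν) (hopt : ∫⁻ p, c p.1 p.2 ∂π = Wc c μ ν)
    (huniq : ∀ π', IsCoupling π' μ ν → ∫⁻ p, c p.1 p.2 ∂π' = Wc c μ ν → π' = π)
    (e : Z × (A × B) ≃ᵐ S × T) (eS : Z × A → S) (eT : Z × B → T)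
    (heS : Measurable eS) (heT : Measurable eT)
    (he : ∀ p, e p = (eS (p.1, p.2.1), eT (p.1, p.2.2)))
    (cA : Z × A → ℝ≥0∞) (cB : Z × B → ℝ≥0∞) (hcA : Measurable cA) (hcB : Measurable cB)
    (hc : ∀ p, c (e p).1 (e p).2 = cA (p.1, p.2.1) + cB (p.1, p.2.2))
    (ρ : Measure Z) [IsFiniteMeasure ρ] (κ : Kernel Z (A × B)) [IsMarkovKernel κ]
    (hπκ : π = (ρ ⊗ₘ κ).map e) :
    ∀ᵐ z ∂ρ, κ z = ((κ z).map Prod.fst).prod ((κ z).map Prod.snd) := by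
  refine Kernel.ae_eq_fst_prod_snd_of_compProd_unique ρ κ fun m hA hB => ?_
  have hfst : Prod.fst ∘ e = eS ∘ Prod.map id Prod.fst := funext fun p => congrArg Prod.fst (he p)
  have hsnd : Prod.snd ∘ e = eT ∘ Prod.map id Prod.snd := funext fun p => congrArg Prod.snd (he p)
  have hcoupling : IsCoupling (m.map e) μ ν := by
    refine ⟨?_, ?_⟩
    · rw [← hπ.1, hπκ, Measure.map_map measurable_fst e.measurable,
        Measure.map_map measurable_fst e.measurable, hfst, map_comp_prodMap_fst_eq hA heS]
    · rw [← hπ.2, hπκ, Measure.map_map measurable_snd e.measurable,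
        Measure.map_map measurable_snd e.measurable, hsnd, map_comp_prodMap_snd_eq hB heT]
  have hcost : ∫⁻ p, c p.1 p.2 ∂(m.map e) = Wc c μ ν := by
    rw [lintegral_map_equiv, ← hopt, hπκ, lintegral_map_equiv]
    simp only [hc]
    exact lintegral_add_eq_of_map_prodMap_eq hA hB hcA hcB
  have hmap : m.map e = (ρ ⊗ₘ κ).map e := hπκ ▸ huniq _ hcoupling hcost
  simpa using congrArg (Measure.map e.symm) hmap

end ProbabilityTheory

def regroupY₁X₂ : (Y₁ × X₂) × (X₁ × Y₂) ≃ᵐ (X₁ × X₂) × (Y₁ × Y₂) where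
  toFun p := ((p.2.1, p.1.2), (p.1.1, p.2.2))
  invFun q := ((q.2.1, q.1.2), (q.1.1, q.2.2))
  left_inv _ := rfl
  right_inv _ := rfl
  measurable_toFun := by simp only [Equiv.coe_fn_mk]; fun_prop
  measurable_invFun := by simp only [Equiv.coe_fn_symm_mk]; fun_prop

def regroupX₁Y₂ : (X₁ × Y₂) × (X₂ × Y₁) ≃ᵐ (X₁ × X₂) × (Y₁ × Y₂) where
  toFun p := ((p.1.1, p.2.1), (p.2.2, p.1.2))
  invFun q := ((q.1.1, q.2.2), (q.1.2, q.2.1))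
  left_inv _ := rfl
  right_inv _ := rfl
  measurable_toFun := by simp only [Equiv.coe_fn_mk]; fun_prop
  measurable_invFun := by simp only [Equiv.coe_fn_symm_mk]; fun_prop

theorem stmt11_general
    [TopologicalSpace X₁] [PolishSpace X₁] [BorelSpace X₁]
    [TopologicalSpace X₂] [PolishSpace X₂] [BorelSpace X₂]
    [TopologicalSpace Y₁] [PolishSpace Y₁] [BorelSpace Y₁]
    [TopologicalSpace Y₂] [PolishSpace Y₂] [BorelSpace Y₂]
    (μ : Measure (X₁ × X₂)) (ν : Measure (Y₁ × Y₂))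
    (c₁ : X₁ → Y₁ → ℝ≥0∞) (c₂ : X₂ → Y₂ → ℝ≥0∞)
    (hc₁ : Continuous fun p : X₁ × Y₁ => c₁ p.1 p.2)
    (hc₂ : Continuous fun p : X₂ × Y₂ => c₂ p.1 p.2)
    (π : Measure ((X₁ × X₂) × (Y₁ × Y₂))) [IsProbabilityMeasure π]
    (hπ : IsCoupling π μ ν)
    (hopt : ∫⁻ p, c₁ p.1.1 p.2.1 + c₂ p.1.2 p.2.2 ∂π
      = Wc (fun x y => c₁ x.1 y.1 + c₂ x.2 y.2) μ ν)
    (huniq : ∀ π' : Measure ((X₁ × X₂) × (Y₁ × Y₂)), IsCoupling π' μ ν →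
      ∫⁻ p, c₁ p.1.1 p.2.1 + c₂ p.1.2 p.2.2 ∂π'
        = Wc (fun x y => c₁ x.1 y.1 + c₂ x.2 y.2) μ ν → π' = π) :
    -- X₁ and Y₂ are conditionally independent given (X₂, Y₁):
    (∀ (κ : Kernel (Y₁ × X₂) (X₁ × Y₂)) [IsMarkovKernel κ],
      π = ((π.map fun p => (p.2.1, p.1.2)) ⊗ₘ κ).map
          (fun p => ((p.2.1, p.1.2), (p.1.1, p.2.2))) →
      ∀ᵐ z ∂(π.map fun p => (p.2.1, p.1.2)),
        κ z = ((κ z).map Prod.fst).prod ((κ z).map Prod.snd)) ∧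
    -- X₂ and Y₁ are conditionally independent given (X₁, Y₂):
    (∀ (η : Kernel (X₁ × Y₂) (X₂ × Y₁)) [IsMarkovKernel η],
      π = ((π.map fun p => (p.1.1, p.2.2)) ⊗ₘ η).map
          (fun p => ((p.1.1, p.2.1), (p.2.2, p.1.2))) →
      ∀ᵐ w ∂(π.map fun p => (p.1.1, p.2.2)),
        η w = ((η w).map Prod.fst).prod ((η w).map Prod.snd)) := by
  have hc₁m := hc₁.measurable
  have hc₂m := hc₂.measurable
  refine ⟨fun κ _ hκ => ?_, fun η _ hη => ?_⟩
  · exact ae_eq_fst_prod_snd_of_unique_optimal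
      (c := fun x y => c₁ x.1 y.1 + c₂ x.2 y.2) hπ hopt huniq regroupY₁X₂
      (fun q => (q.2, q.1.2)) (fun q => (q.1.1, q.2)) (by fun_prop) (by fun_prop) (fun _ => rfl)
      (fun q => c₁ q.2 q.1.1) (fun q => c₂ q.1.2 q.2) (by fun_prop)
      (by fun_prop) (fun _ => rfl) _ κ hκ
  · exact ae_eq_fst_prod_snd_of_unique_optimal
      (c := fun x y => c₁ x.1 y.1 + c₂ x.2 y.2) hπ hopt huniq regroupX₁Y₂
      (fun q => (q.1.1, q.2)) (fun q => (q.2, q.1.2)) (by fun_prop) (by fun_prop) (fun _ => rfl)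
      (fun q => c₂ q.2 q.1.2) (fun q => c₁ q.1.1 q.2) (by fun_prop)
      (by fun_prop) (fun _ => add_comm _ _) _ η hη

theorem stmt11
    [TopologicalSpace X₁] [PolishSpace X₁] [BorelSpace X₁]
    [TopologicalSpace X₂] [PolishSpace X₂] [BorelSpace X₂]
    [TopologicalSpace Y₁] [PolishSpace Y₁] [BorelSpace Y₁]
    [TopologicalSpace Y₂] [PolishSpace Y₂] [BorelSpace Y₂]
    (μ : Measure (X₁ × X₂)) (ν : Measure (Y₁ × Y₂))
    [IsProbabilityMeasure μ] [IsProbabilityMeasure ν]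
    (c₁ : X₁ → Y₁ → ℝ≥0∞) (c₂ : X₂ → Y₂ → ℝ≥0∞)
    (hc₁ : Continuous fun p : X₁ × Y₁ => c₁ p.1 p.2)
    (hc₂ : Continuous fun p : X₂ × Y₂ => c₂ p.1 p.2)
    (π : Measure ((X₁ × X₂) × (Y₁ × Y₂))) [IsProbabilityMeasure π]
    (hπ : IsCoupling π μ ν)
    (hopt : ∫⁻ p, c₁ p.1.1 p.2.1 + c₂ p.1.2 p.2.2 ∂π
      = Wc (fun x y => c₁ x.1 y.1 + c₂ x.2 y.2) μ ν)
    (huniq : ∀ π' : Measure ((X₁ × X₂) × (Y₁ × Y₂)), IsCoupling π' μ ν →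
      ∫⁻ p, c₁ p.1.1 p.2.1 + c₂ p.1.2 p.2.2 ∂π'
        = Wc (fun x y => c₁ x.1 y.1 + c₂ x.2 y.2) μ ν → π' = π) :
    -- X₁ and Y₂ are conditionally independent given (X₂, Y₁):
    (∀ (κ : Kernel (Y₁ × X₂) (X₁ × Y₂)) [IsMarkovKernel κ],
      π = ((π.map fun p => (p.2.1, p.1.2)) ⊗ₘ κ).map
          (fun p => ((p.2.1, p.1.2), (p.1.1, p.2.2))) →
      ∀ᵐ z ∂(π.map fun p => (p.2.1, p.1.2)),
        κ z = ((κ z).map Prod.fst).prod ((κ z).map Prod.snd)) ∧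
    -- X₂ and Y₁ are conditionally independent given (X₁, Y₂):
    (∀ (η : Kernel (X₁ × Y₂) (X₂ × Y₁)) [IsMarkovKernel η],
      π = ((π.map fun p => (p.1.1, p.2.2)) ⊗ₘ η).map
          (fun p => ((p.1.1, p.2.1), (p.2.2, p.1.2))) →
      ∀ᵐ w ∂(π.map fun p => (p.1.1, p.2.2)),
        η w = ((η w).map Prod.fst).prod ((η w).map Prod.snd)) :=
  stmt11_general μ ν c₁ c₂ hc₁ hc₂ π hπ hopt huniq
end
end

section
/- If μ(X₁×{x̄₂}) = 1 and ν({ȳ₁}×Y₂) = 1 for some x̄₂ ∈ X₂, ȳ₁ ∈ Y₁, then the set of cardinal flows F(μ,ν) contains exactly one element, namely (μ ⊗ δ_{ȳ₁}, δ_{x̄₂} ⊗ ν), and consequently every coupling π ∈ Π(μ,ν) is an optimal transportation plan for any separable cost c = c₁ + c₂. -/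
open MeasureTheory ProbabilityTheory
open scoped ENNReal ProbabilityTheory

noncomputable section

variable {X₁ X₂ Y₁ Y₂ : Type*} [MeasurableSpace X₁] [MeasurableSpace X₂]
  [MeasurableSpace Y₁] [MeasurableSpace Y₂]

/-!
Both measures are concentrated on a slice: `μ` on `X₁ × {x̄₂}` and `ν` on `{ȳ₁} × Y₂`.
The marginal constraints push these concentrations onto the flows: `f¹` lives on `x₂ = x̄₂`,
`f²` on `y₁ = ȳ₁`, and the shared marginal on `Y₁ × X₂` transfers each fact to the other
measure. A measure concentrated on a slice is the product of its marginal with a Dirac mass,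
which pins the flow down. Likewise every coupling is concentrated on `x₂ = x̄₂, y₁ = ȳ₁`, so
the separable cost of a coupling reduces to `∫ c₁(x₁, ȳ₁) dμ + ∫ c₂(x̄₂, y₂) dν`, the same
for all couplings.
-/

section ProductDirac

variable {A B : Type*} [MeasurableSpace A] [MeasurableSpace B]

lemma ae_of_measure_eq_one {κ : Measure A} [IsProbabilityMeasure κ] {s : Set A}
    (hs : MeasurableSet s) (h : κ s = 1) : ∀ᵐ a ∂κ, a ∈ s :=
  (ae_iff_measure_eq (p := (· ∈ s)) hs.nullMeasurableSet).mpr (by simp [h])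

lemma map_eq_dirac_of_ae_eq {κ : Measure A} [IsProbabilityMeasure κ] {f : A → B} {c : B}
    (h : ∀ᵐ a ∂κ, f a = c) : κ.map f = Measure.dirac c := by
  rw [Measure.map_congr h, Measure.map_const, measure_univ, one_smul]

lemma eq_prod_dirac_of_ae_snd_eq {κ : Measure (A × B)} [SFinite κ] {b : B}
    (h : ∀ᵐ p ∂κ, p.2 = b) : κ = (κ.map Prod.fst).prod (Measure.dirac b) := by
  rw [Measure.prod_dirac, Measure.map_map (by fun_prop) measurable_fst]
  conv_lhs => rw [← Measure.map_id (μ := κ)]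
  exact Measure.map_congr (h.mono fun p hp => by simp [Prod.ext_iff, hp])

lemma eq_dirac_prod_of_ae_fst_eq {κ : Measure (A × B)} [SFinite κ] {a : A}
    (h : ∀ᵐ p ∂κ, p.1 = a) : κ = (Measure.dirac a).prod (κ.map Prod.snd) := by
  rw [Measure.dirac_prod, Measure.map_map (by fun_prop) measurable_snd]
  conv_lhs => rw [← Measure.map_id (μ := κ)]
  exact Measure.map_congr (h.mono fun p hp => by simp [Prod.ext_iff, hp])

lemma ae_comp_of_map_eq {C : Type*} [MeasurableSpace C] {κ₁ : Measure A} {κ₂ : Measure B}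
    {f : A → C} {g : B → C} (hf : Measurable f) (hg : Measurable g)
    (hfg : κ₁.map f = κ₂.map g) {p : C → Prop} (hp : MeasurableSet {c | p c})
    (h : ∀ᵐ b ∂κ₂, p (g b)) : ∀ᵐ a ∂κ₁, p (f a) :=
  ae_of_ae_map hf.aemeasurable (hfg ▸ (ae_map_iff hg.aemeasurable hp).mpr h)

end ProductDirac

section Coupling

variable {A B : Type*} [MeasurableSpace A] [MeasurableSpace B]

lemma isCoupling_prod (μ : Measure A) (ν : Measure B)
    [IsProbabilityMeasure μ] [IsProbabilityMeasure ν] : IsCoupling (μ.prod ν) μ ν := by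
  constructor <;> simp

lemma IsCoupling.lintegral_add_comp {π : Measure (A × B)} {μ : Measure A} {ν : Measure B}
    (hπ : IsCoupling π μ ν) {f : A → ℝ≥0∞} {g : B → ℝ≥0∞} (hf : Measurable f)
    (hg : Measurable g) : ∫⁻ p, f p.1 + g p.2 ∂π = ∫⁻ a, f a ∂μ + ∫⁻ b, g b ∂ν := by
  rw [← hπ.1, ← hπ.2, lintegral_map hf measurable_fst, lintegral_map hg measurable_snd]
  exact lintegral_add_left (hf.comp measurable_fst) _

lemma Wc_eq_of_forall_isCoupling {c : A → B → ℝ≥0∞} {μ : Measure A} {ν : Measure B} {K : ℝ≥0∞}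
    {π₀ : Measure (A × B)} (hπ₀ : IsCoupling π₀ μ ν)
    (h : ∀ π, IsCoupling π μ ν → ∫⁻ p, c p.1 p.2 ∂π = K) : Wc c μ ν = K :=
  le_antisymm (iInf₂_le_of_le π₀ hπ₀ (h π₀ hπ₀).le) (le_iInf₂ fun π hπ => (h π hπ).ge)

end Coupling

section Concentrated

variable {μ : Measure (X₁ × X₂)} {ν : Measure (Y₁ × Y₂)} {xb : X₂} {yb : Y₁}

lemma IsCardinalFlow.eq_prod_dirac_of_ae
    [MeasurableSingletonClass X₂] [MeasurableSingletonClass Y₁]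
    {f1 : Measure ((X₁ × X₂) × Y₁)} {f2 : Measure (X₂ × (Y₁ × Y₂))}
    [SFinite f1] [SFinite f2] (hF : IsCardinalFlow μ ν f1 f2)
    (hμ : ∀ᵐ x ∂μ, x.2 = xb) (hν : ∀ᵐ y ∂ν, y.1 = yb) :
    f1 = μ.prod (Measure.dirac yb) ∧ f2 = (Measure.dirac xb).prod ν := by
  obtain ⟨h1, h2, h12⟩ := hF
  have hf1 : ∀ᵐ p ∂f1, p.1.2 = xb := ae_of_ae_map measurable_fst.aemeasurable (h1 ▸ hμ)
  have hf2 : ∀ᵐ q ∂f2, q.2.1 = yb := ae_of_ae_map measurable_snd.aemeasurable (h2 ▸ hν)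
  have hf1' : ∀ᵐ p ∂f1, p.2 = yb :=
    ae_comp_of_map_eq (by fun_prop) (by fun_prop) h12 (p := fun q : Y₁ × X₂ => q.1 = yb)
      (measurable_fst (measurableSet_singleton yb)) hf2
  have hf2' : ∀ᵐ q ∂f2, q.1 = xb :=
    ae_comp_of_map_eq (by fun_prop) (by fun_prop) h12.symm (p := fun q : Y₁ × X₂ => q.2 = xb)
      (measurable_snd (measurableSet_singleton xb)) hf1
  constructor
  · rw [eq_prod_dirac_of_ae_snd_eq hf1', h1]
  · rw [eq_dirac_prod_of_ae_fst_eq hf2', h2]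

lemma isCardinalFlow_prod_dirac [IsProbabilityMeasure μ] [IsProbabilityMeasure ν]
    (hμ : ∀ᵐ x ∂μ, x.2 = xb) (hν : ∀ᵐ y ∂ν, y.1 = yb) :
    IsCardinalFlow μ ν (μ.prod (Measure.dirac yb)) ((Measure.dirac xb).prod ν) := by
  refine ⟨by simp, by simp, ?_⟩
  rw [Measure.prod_dirac, Measure.dirac_prod, Measure.map_map (by fun_prop) (by fun_prop),
    Measure.map_map (by fun_prop) (by fun_prop),
    map_eq_dirac_of_ae_eq (c := (yb, xb)) (hμ.mono fun x hx => by simp [hx]),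
    map_eq_dirac_of_ae_eq (c := (yb, xb)) (hν.mono fun y hy => by simp [hy])]

lemma IsCoupling.lintegral_separable_eq {π : Measure ((X₁ × X₂) × (Y₁ × Y₂))}
    (hπ : IsCoupling π μ ν) (hμ : ∀ᵐ x ∂μ, x.2 = xb) (hν : ∀ᵐ y ∂ν, y.1 = yb)
    {c₁ : X₁ → Y₁ → ℝ≥0∞} {c₂ : X₂ → Y₂ → ℝ≥0∞}
    (hc₁ : Measurable fun p : X₁ × Y₁ => c₁ p.1 p.2)
    (hc₂ : Measurable fun p : X₂ × Y₂ => c₂ p.1 p.2) :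
    ∫⁻ p, c₁ p.1.1 p.2.1 + c₂ p.1.2 p.2.2 ∂π
      = ∫⁻ x, c₁ x.1 yb ∂μ + ∫⁻ y, c₂ xb y.2 ∂ν := by
  have hx : ∀ᵐ p ∂π, p.1.2 = xb := ae_of_ae_map measurable_fst.aemeasurable (hπ.1 ▸ hμ)
  have hy : ∀ᵐ p ∂π, p.2.1 = yb := ae_of_ae_map measurable_snd.aemeasurable (hπ.2 ▸ hν)
  refine (lintegral_congr_ae ?_).trans (hπ.lintegral_add_comp (f := fun x => c₁ x.1 yb)
    (g := fun y => c₂ xb y.2) (hc₁.comp (measurable_fst.prodMk measurable_const))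
    (hc₂.comp (measurable_const.prodMk measurable_snd)))
  filter_upwards [hx, hy] with p hpx hpy
  rw [hpx, hpy]

end Concentrated

theorem stmt13 [MeasurableSingletonClass X₂] [MeasurableSingletonClass Y₁]
    (μ : Measure (X₁ × X₂)) (ν : Measure (Y₁ × Y₂))
    [IsProbabilityMeasure μ] [IsProbabilityMeasure ν]
    (xb : X₂) (yb : Y₁)
    (hμ : μ {p | p.2 = xb} = 1) (hν : ν {p | p.1 = yb} = 1) :
    -- the set of cardinal flows is a singleton
    Flows μ ν = {(μ.prod (Measure.dirac yb), (Measure.dirac xb).prod ν)} ∧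
    -- every coupling is an optimal transportation plan for any separable cost
    ∀ (c₁ : X₁ → Y₁ → ℝ≥0∞) (c₂ : X₂ → Y₂ → ℝ≥0∞),
      (Measurable fun p : X₁ × Y₁ => c₁ p.1 p.2) →
      (Measurable fun p : X₂ × Y₂ => c₂ p.1 p.2) →
      ∀ π : Measure ((X₁ × X₂) × (Y₁ × Y₂)), IsCoupling π μ ν →
        ∫⁻ p, c₁ p.1.1 p.2.1 + c₂ p.1.2 p.2.2 ∂π
          = Wc (fun x y => c₁ x.1 y.1 + c₂ x.2 y.2) μ ν := by
  have hμ' : ∀ᵐ x ∂μ, x.2 = xb :=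
    ae_of_measure_eq_one (measurable_snd (measurableSet_singleton xb)) hμ
  have hν' : ∀ᵐ y ∂ν, y.1 = yb :=
    ae_of_measure_eq_one (measurable_fst (measurableSet_singleton yb)) hν
  refine ⟨?_, fun c₁ c₂ hc₁ hc₂ π hπ => ?_⟩
  · ext ⟨f1, f2⟩
    simp only [Set.mem_singleton_iff, Prod.mk.injEq]
    constructor
    · rintro ⟨_, _, hF⟩
      exact hF.eq_prod_dirac_of_ae hμ' hν'
    · rintro ⟨rfl, rfl⟩
      exact ⟨inferInstance, inferInstance, isCardinalFlow_prod_dirac hμ' hν'⟩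
  · have hcost := fun ρ (hρ : IsCoupling ρ μ ν) => hρ.lintegral_separable_eq hμ' hν' hc₁ hc₂
    rw [hcost π hπ, Wc_eq_of_forall_isCoupling (isCoupling_prod μ ν) hcost]
end
end

section
/- The pivot measure need not be the only minimizer of λ ↦ W_d(μ,λ) + W_d(λ,ν) over intermedium measures: for X = ℝ² with d the l¹ metric, μ = ½(δ_{(0,0)} + δ_{(7,1)}) and ν = ½(δ_{(1,1)} + δ_{(8,0)}), the measure ν itself lies in I(μ,ν) and satisfies W_d(μ,ν) = W_d(μ,ν) + W_d(ν,ν), yet the unique pivot measure is ζ = ½(δ_{(1,0)} + δ_{(8,1)}) ≠ ν. -/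
open MeasureTheory ProbabilityTheory
open scoped ENNReal ProbabilityTheory

noncomputable section

variable {X₁ X₂ Y₁ Y₂ : Type*} [MeasurableSpace X₁] [MeasurableSpace X₂]
  [MeasurableSpace Y₁] [MeasurableSpace Y₂]

/-- 1-Wasserstein distance on `ℝ²` for the `l¹` ground metric. -/
noncomputable def Wl1 (μ ν : Measure (ℝ × ℝ)) : ℝ≥0∞ :=
  Wc (fun x y : ℝ × ℝ => ENNReal.ofReal (|x.1 - y.1| + |x.2 - y.2|)) μ ν

/-! On the pivot `η` of a cardinal flow, the point `x ∈ supp μ` with second coordinate `x₂`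
is `(7 x₂, x₂)` and the point `y ∈ supp ν` with first coordinate `y₁` is `(y₁, (8 - y₁)/7)`, so
the cost of the flow is `∫ g dη` with
`g(y₁, x₂) = |7 x₂ - y₁| + |x₂ - (8 - y₁)/7|`. The marginals of `η` are `½(δ₁ + δ₈)` and
`½(δ₀ + δ₁)`; on the four points of `{1, 8} × {0, 1}` the function `g` takes the values
`2, 6, 8, 2`, so the optimal cost is `2` and it is attained exactly when `η` lives on
`{(1, 0), (8, 1)}`, which together with its first marginal forces `η = ζ`. -/

def halfDirac {α : Type*} [MeasurableSpace α] (a b : α) : Measure α :=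
  (2 : ℝ≥0∞)⁻¹ • (Measure.dirac a + Measure.dirac b)

section halfDirac

variable {α β : Type*} [MeasurableSpace α] [MeasurableSpace β]

instance (a b : α) : IsProbabilityMeasure (halfDirac a b) :=
  ⟨by simp [halfDirac, ENNReal.inv_two_add_inv_two]⟩

lemma map_halfDirac {f : α → β} (hf : Measurable f) (a b : α) :
    (halfDirac a b).map f = halfDirac (f a) (f b) := by
  simp only [halfDirac, Measure.map_smul, Measure.map_add _ _ hf, Measure.map_dirac' hf]

lemma halfDirac_comm (a b : α) : halfDirac a b = halfDirac b a := by
  rw [halfDirac, add_comm, halfDirac]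

variable [MeasurableSingletonClass α]

lemma ae_halfDirac {p : α → Prop} {a b : α} (ha : p a) (hb : p b) :
    ∀ᵐ x ∂halfDirac a b, p x := by
  refine Measure.ae_smul_measure (ae_add_measure_iff.2 ⟨?_, ?_⟩) _ <;> rw [ae_dirac_eq]
  exacts [ha, hb]

lemma lintegral_halfDirac (f : α → ℝ≥0∞) (a b : α) :
    ∫⁻ x, f x ∂halfDirac a b = 2⁻¹ * (f a + f b) := by
  simp [halfDirac, lintegral_add_measure, mul_add]

end halfDirac

lemma Wc_self_eq_zero {A : Type*} [MeasurableSpace A] {c : A → A → ℝ≥0∞}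
    (hc : ∀ x, c x x = 0) (μ : Measure A) : Wc c μ μ = 0 := by
  have hdiag : Measurable fun x : A => (x, x) := measurable_id.prodMk measurable_id
  have hπ : IsCoupling (μ.map fun x => (x, x)) μ μ :=
    ⟨by rw [Measure.map_map measurable_fst hdiag]; exact Measure.map_id,
      by rw [Measure.map_map measurable_snd hdiag]; exact Measure.map_id⟩
  unfold Wc
  refine le_antisymm ((iInf₂_le (μ.map fun x => (x, x)) hπ).trans ?_) zero_le
  exact (lintegral_map_le _ _).trans_eq (by simp [hc])

lemma Measure.eq_map_graph_of_ae {α β : Type*} [MeasurableSpace α] [MeasurableSpace β]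
    {η : Measure (α × β)} {φ : α → β} (hφ : Measurable φ) (h : ∀ᵐ z ∂η, z.2 = φ z.1) :
    η = (η.map Prod.fst).map fun a => (a, φ a) := by
  rw [Measure.map_map (measurable_id'.prodMk hφ) measurable_fst]
  conv_lhs => rw [← Measure.map_id (μ := η)]
  exact Measure.map_congr (h.mono fun z hz => Prod.ext rfl hz)

namespace IsCardinalFlow

variable {μ : Measure (X₁ × X₂)} {ν : Measure (Y₁ × Y₂)}
  {f1 : Measure ((X₁ × X₂) × Y₁)} {f2 : Measure (X₂ × (Y₁ × Y₂))}

lemma map_fst_pivot (h : IsCardinalFlow μ ν f1 f2) :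
    (f1.map fun p => (p.2, p.1.2)).map Prod.fst = ν.map Prod.fst := by
  rw [h.2.2, Measure.map_map measurable_fst (by fun_prop), ← h.2.1,
    Measure.map_map measurable_fst measurable_snd]
  rfl

lemma map_snd_pivot (h : IsCardinalFlow μ ν f1 f2) :
    (f1.map fun p => (p.2, p.1.2)).map Prod.snd = μ.map Prod.snd := by
  rw [Measure.map_map measurable_snd (by fun_prop), ← h.1,
    Measure.map_map measurable_snd measurable_fst]
  rfl

lemma CT_eq_lintegral_pivot (h : IsCardinalFlow μ ν f1 f2) {c₁ : X₁ → Y₁ → ℝ≥0∞}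
    {c₂ : X₂ → Y₂ → ℝ≥0∞} {g₁ g₂ : Y₁ × X₂ → ℝ≥0∞} (hg₁ : Measurable g₁) (hg₂ : Measurable g₂)
    (hc₁ : ∀ᵐ x ∂μ, ∀ y₁, c₁ x.1 y₁ = g₁ (y₁, x.2))
    (hc₂ : ∀ᵐ y ∂ν, ∀ x₂, c₂ x₂ y.2 = g₂ (y.1, x₂)) :
    CT c₁ c₂ (f1, f2) = ∫⁻ z, g₁ z + g₂ z ∂(f1.map fun p => (p.2, p.1.2)) := by
  have e₁ : ∫⁻ q, c₁ q.1.1 q.2 ∂f1 = ∫⁻ z, g₁ z ∂(f1.map fun p => (p.2, p.1.2)) := by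
    rw [lintegral_map hg₁ (by fun_prop)]
    rw [← h.1] at hc₁
    exact lintegral_congr_ae ((ae_of_ae_map measurable_fst.aemeasurable hc₁).mono
      fun q hq => hq q.2)
  have e₂ : ∫⁻ q, c₂ q.1 q.2.2 ∂f2 = ∫⁻ z, g₂ z ∂(f1.map fun p => (p.2, p.1.2)) := by
    rw [h.2.2, lintegral_map hg₂ (by fun_prop)]
    rw [← h.2.1] at hc₂
    exact lintegral_congr_ae ((ae_of_ae_map measurable_snd.aemeasurable hc₂).mono
      fun q hq => hq q.1)
  rw [lintegral_add_left hg₁, ← e₁, ← e₂]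
  rfl

end IsCardinalFlow

namespace PivotExample

def μ₀ : Measure (ℝ × ℝ) := halfDirac ((0 : ℝ), (0 : ℝ)) ((7 : ℝ), (1 : ℝ))

def ν₀ : Measure (ℝ × ℝ) := halfDirac ((1 : ℝ), (1 : ℝ)) ((8 : ℝ), (0 : ℝ))

def ζ₀ : Measure (ℝ × ℝ) := halfDirac ((1 : ℝ), (0 : ℝ)) ((8 : ℝ), (1 : ℝ))

def absCost (a b : ℝ) : ℝ≥0∞ := ENNReal.ofReal |a - b|

def pivotCost (z : ℝ × ℝ) : ℝ≥0∞ :=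
  ENNReal.ofReal |7 * z.2 - z.1| + ENNReal.ofReal |z.2 - (8 - z.1) / 7|

lemma map_fst_ν₀ : ν₀.map Prod.fst = halfDirac 1 8 := map_halfDirac measurable_fst _ _

lemma map_snd_μ₀ : μ₀.map Prod.snd = halfDirac 0 1 := map_halfDirac measurable_snd _ _

lemma map_snd_ν₀ : ν₀.map Prod.snd = μ₀.map Prod.snd := by
  rw [map_snd_μ₀, ν₀, map_halfDirac measurable_snd, halfDirac_comm]

lemma ζ₀_ne_ν₀ : ζ₀ ≠ ν₀ := by
  intro h
  have h10 := congrArg (fun m : Measure (ℝ × ℝ) => m {((1 : ℝ), (0 : ℝ))}) h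
  norm_num [ζ₀, ν₀, halfDirac, Measure.dirac_apply, Set.indicator_apply] at h10

variable {f1 : Measure ((ℝ × ℝ) × ℝ)} {f2 : Measure (ℝ × (ℝ × ℝ))}

lemma CT_eq_lintegral_pivotCost (h : IsCardinalFlow μ₀ ν₀ f1 f2) :
    CT absCost absCost (f1, f2) = ∫⁻ z, pivotCost z ∂(f1.map fun p => (p.2, p.1.2)) :=
  h.CT_eq_lintegral_pivot (by fun_prop) (by fun_prop)
    (ae_halfDirac (by norm_num [absCost]) (by norm_num [absCost]))
    (ae_halfDirac (by norm_num [absCost]) (by norm_num [absCost]))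

lemma ae_mem_pivot (h : IsCardinalFlow μ₀ ν₀ f1 f2) :
    ∀ᵐ z ∂(f1.map fun p => (p.2, p.1.2)), (z.1 = 1 ∨ z.1 = 8) ∧ (z.2 = 0 ∨ z.2 = 1) := by
  have h₁ : ∀ᵐ y ∂(f1.map fun p => (p.2, p.1.2)).map Prod.fst, y = (1 : ℝ) ∨ y = 8 := by
    rw [h.map_fst_pivot, map_fst_ν₀]
    exact ae_halfDirac (Or.inl rfl) (Or.inr rfl)
  have h₂ : ∀ᵐ x ∂(f1.map fun p => (p.2, p.1.2)).map Prod.snd, x = (0 : ℝ) ∨ x = 1 := by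
    rw [h.map_snd_pivot, map_snd_μ₀]
    exact ae_halfDirac (Or.inl rfl) (Or.inr rfl)
  exact (ae_of_ae_map measurable_fst.aemeasurable h₁).and
    (ae_of_ae_map measurable_snd.aemeasurable h₂)

lemma two_le_pivotCost {z : ℝ × ℝ} (h₁ : z.1 = 1 ∨ z.1 = 8) (h₂ : z.2 = 0 ∨ z.2 = 1) :
    2 ≤ pivotCost z := by
  rcases h₁ with h₁ | h₁ <;> rcases h₂ with h₂ | h₂ <;> norm_num [pivotCost, h₁, h₂]

lemma pivotCost_eq_two {z : ℝ × ℝ} (h₁ : z.1 = 1 ∨ z.1 = 8) (h₂ : z.2 = 0 ∨ z.2 = 1)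
    (hz : pivotCost z = 2) : z.2 = (z.1 - 1) / 7 := by
  rcases h₁ with h₁ | h₁ <;> rcases h₂ with h₂ | h₂ <;> norm_num [h₁, h₂] <;>
    norm_num [pivotCost, h₁, h₂] at hz

lemma two_le_CT {F : Measure ((ℝ × ℝ) × ℝ) × Measure (ℝ × (ℝ × ℝ))} (hF : F ∈ Flows μ₀ ν₀) :
    2 ≤ CT absCost absCost F := by
  obtain ⟨hP, -, h⟩ := hF
  have : IsProbabilityMeasure (F.1.map fun p => (p.2, p.1.2)) :=
    Measure.isProbabilityMeasure_map (by fun_prop)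
  calc (2 : ℝ≥0∞) = ∫⁻ _, 2 ∂(F.1.map fun p => (p.2, p.1.2)) := by simp
    _ ≤ ∫⁻ z, pivotCost z ∂(F.1.map fun p => (p.2, p.1.2)) :=
      lintegral_mono_ae ((ae_mem_pivot h).mono fun z hz => two_le_pivotCost hz.1 hz.2)
    _ = CT absCost absCost F := (CT_eq_lintegral_pivotCost h).symm

lemma pivot_eq_ζ₀ {F : Measure ((ℝ × ℝ) × ℝ) × Measure (ℝ × (ℝ × ℝ))} (hF : F ∈ Flows μ₀ ν₀)
    (hCT : CT absCost absCost F = 2) : F.1.map (fun p => (p.2, p.1.2)) = ζ₀ := by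
  obtain ⟨hP, -, h⟩ := hF
  have : IsProbabilityMeasure (F.1.map fun p => (p.2, p.1.2)) :=
    Measure.isProbabilityMeasure_map (by fun_prop)
  have hsupp := ae_mem_pivot h
  have hcost : (fun _ => 2) =ᵐ[F.1.map fun p => (p.2, p.1.2)] pivotCost :=
    ae_eq_of_ae_le_of_lintegral_le (hsupp.mono fun z hz => two_le_pivotCost hz.1 hz.2)
      (by simp) (by unfold pivotCost; fun_prop)
      (by rw [← CT_eq_lintegral_pivotCost h]; simp [hCT])
  have hgraph : ∀ᵐ z ∂(F.1.map fun p => (p.2, p.1.2)), z.2 = (z.1 - 1) / 7 :=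
    (hsupp.and hcost).mono fun z hz => pivotCost_eq_two hz.1.1 hz.1.2 hz.2.symm
  rw [Measure.eq_map_graph_of_ae (η := F.1.map _) (φ := fun y => (y - 1) / 7) (by fun_prop)
    hgraph, h.map_fst_pivot, map_fst_ν₀, map_halfDirac (by fun_prop)]
  norm_num [ζ₀]

def F₀ : Measure ((ℝ × ℝ) × ℝ) × Measure (ℝ × (ℝ × ℝ)) :=
  (halfDirac (((0 : ℝ), (0 : ℝ)), (1 : ℝ)) (((7 : ℝ), (1 : ℝ)), (8 : ℝ)),
    halfDirac ((0 : ℝ), ((1 : ℝ), (1 : ℝ))) ((1 : ℝ), ((8 : ℝ), (0 : ℝ))))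

lemma pivot_F₀ : F₀.1.map (fun p => (p.2, p.1.2)) = ζ₀ :=
  map_halfDirac (by fun_prop) _ _

lemma F₀_mem_flows : F₀ ∈ Flows μ₀ ν₀ := by
  refine ⟨by unfold F₀; infer_instance, by unfold F₀; infer_instance,
    map_halfDirac measurable_fst _ _, map_halfDirac measurable_snd _ _, ?_⟩
  rw [pivot_F₀, F₀, map_halfDirac (by fun_prop)]
  rfl

lemma CT_F₀ : CT absCost absCost F₀ = 2 := by
  show CT absCost absCost (F₀.1, F₀.2) = 2
  have h₁ : pivotCost (1, 0) = 2 := by norm_num [pivotCost]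
  have h₂ : pivotCost (8, 1) = 2 := by norm_num [pivotCost]
  rw [CT_eq_lintegral_pivotCost F₀_mem_flows.2.2, pivot_F₀, ζ₀, lintegral_halfDirac, h₁, h₂,
    ← mul_two, ← mul_assoc, ENNReal.inv_mul_cancel two_ne_zero ENNReal.ofNat_ne_top, one_mul]

lemma iInf_CT_eq_two : ⨅ G ∈ Flows μ₀ ν₀, CT absCost absCost G = 2 :=
  le_antisymm ((iInf₂_le F₀ F₀_mem_flows).trans_eq CT_F₀) (le_iInf₂ fun _ => two_le_CT)

lemma isPivot_ζ₀ : IsPivot μ₀ ν₀ absCost absCost ζ₀ :=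
  ⟨F₀, F₀_mem_flows, pivot_F₀, CT_F₀.trans iInf_CT_eq_two.symm⟩

lemma eq_ζ₀_of_isPivot {ζ : Measure (ℝ × ℝ)} (h : IsPivot μ₀ ν₀ absCost absCost ζ) : ζ = ζ₀ := by
  obtain ⟨F, hF, rfl, hopt⟩ := h
  exact pivot_eq_ζ₀ hF (hopt.trans iInf_CT_eq_two)

end PivotExample

open PivotExample in
theorem stmt15 :
    letI μ : Measure (ℝ × ℝ) :=
      (2 : ℝ≥0∞)⁻¹ • (Measure.dirac ((0 : ℝ), (0 : ℝ)) + Measure.dirac ((7 : ℝ), (1 : ℝ)))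
    letI ν : Measure (ℝ × ℝ) :=
      (2 : ℝ≥0∞)⁻¹ • (Measure.dirac ((1 : ℝ), (1 : ℝ)) + Measure.dirac ((8 : ℝ), (0 : ℝ)))
    letI ζ : Measure (ℝ × ℝ) :=
      (2 : ℝ≥0∞)⁻¹ • (Measure.dirac ((1 : ℝ), (0 : ℝ)) + Measure.dirac ((8 : ℝ), (1 : ℝ)))
    letI c : ℝ → ℝ → ℝ≥0∞ := fun a b => ENNReal.ofReal |a - b|
    -- ν is an intermedium measure between μ and ν
    (ν.map Prod.snd = μ.map Prod.snd ∧ ν.map Prod.fst = ν.map Prod.fst) ∧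
    -- ν minimizes λ ↦ W_d(μ,λ) + W_d(λ,ν)
    Wl1 μ ν = Wl1 μ ν + Wl1 ν ν ∧
    -- yet the unique pivot measure is ζ ≠ ν
    IsPivot μ ν c c ζ ∧ (∀ ζ' : Measure (ℝ × ℝ), IsPivot μ ν c c ζ' → ζ' = ζ) ∧ ζ ≠ ν := by
  refine ⟨⟨map_snd_ν₀, rfl⟩, ?_, isPivot_ζ₀, fun _ => eq_ζ₀_of_isPivot, ζ₀_ne_ν₀⟩
  rw [Wl1, Wl1, Wc_self_eq_zero (fun x => by simp), add_zero]
end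
end

section
/- Let μ, ν ∈ P(ℝ²) with c(x,y) = h(|x₁−y₁|) + h(|x₂−y₂|), h strictly convex nonnegative with h(0)=0, and suppose μ({x₂ = 0}) = 1. Then the optimal cardinal flow is f¹ = ((F⁻¹_{μ₁}, F⁻¹_{ν₁})_# L_{[0,1]}) ⊗ δ₀ and f² = (δ₀ ⊗ (F⁻¹_{ν_{|y₁}})_# L_{[0,1]}) ⊗ ν₁, and W_c(μ,ν) = W_{c₁}(μ₁,ν₁) + ∫_ℝ W_{c₂}(δ₀, ν_{|y₁}) dν₁(y₁). -/
open MeasureTheory ProbabilityTheory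
open scoped ENNReal ProbabilityTheory

noncomputable section

variable {X₁ X₂ Y₁ Y₂ : Type*} [MeasurableSpace X₁] [MeasurableSpace X₂]
  [MeasurableSpace Y₁] [MeasurableSpace Y₂]

/-- Pseudo-inverse (quantile function) of the cumulative distribution function. -/
noncomputable def qf (m : Measure ℝ) (s : ℝ) : ℝ := sInf {x : ℝ | s ≤ cdf m x}

/-!
Because `μ` lives on the axis `{x₂ = 0}`, every cardinal flow pays at least `W_{c₁}(μ₁, ν₁)` in the
first coordinate and at least `W_{c₂}(δ₀, ν₂) = ∫ h(|y₂|) dν` in the second, and so does every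
coupling of `μ` and `ν`. The flow of the statement attains this sum, and gluing its two halves
along their common marginal gives a coupling with the same cost, so all three quantities agree.

The one-dimensional problem is solved by the comonotone coupling: it maximises every
`P(X ≤ r, Y ≤ y)`, hence minimises every hinge cost `∫ (x - y - s)⁺ = ∫ P(X > r, Y ≤ r - s) dr`.
The cost `h(|x - y|)` is the sum of the convex nondecreasing costs `h((x - y)⁺)` and `h((y - x)⁺)`,
each of which is approximated from below by nonnegative combinations of hinges, and Fatou's lemma
passes to the limit.
-/

open Set Filter Topology

section Quantile

variable (m : Measure ℝ)

theorem qf_le_iff_le_cdf {s x : ℝ} (hs0 : 0 < s) (hs1 : s < 1) : qf m s ≤ x ↔ s ≤ cdf m x := by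
  have hbdd : BddBelow {z : ℝ | s ≤ cdf m z} := by
    obtain ⟨w, hw⟩ : ∃ w, cdf m w < s :=
      ((tendsto_cdf_atBot m).eventually (eventually_lt_nhds hs0)).exists
    exact ⟨w, fun z hz => not_lt.1 fun hzw => (hz.trans ((monotone_cdf m) hzw.le)).not_gt hw⟩
  have hne : {z : ℝ | s ≤ cdf m z}.Nonempty :=
    ((tendsto_cdf_atTop m).eventually (eventually_ge_nhds hs1)).exists
  refine ⟨fun hle => ?_, fun hcdf => csInf_le hbdd hcdf⟩
  -- the infimum is attained, by right continuity of the cdf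
  have hq : s ≤ cdf m (qf m s) := by
    have hev : ∀ᶠ z in 𝓝[>] (qf m s), s ≤ cdf m z := by
      filter_upwards [self_mem_nhdsWithin] with z hz
      obtain ⟨w, hw, hwz⟩ := (csInf_lt_iff hbdd hne).mp hz
      exact hw.trans ((monotone_cdf m) hwz.le)
    exact ge_of_tendsto (((cdf m).right_continuous _).mono_left
      (nhdsWithin_mono _ Ioi_subset_Ici_self)) hev
  exact hq.trans ((monotone_cdf m) hle)

theorem monotoneOn_qf : MonotoneOn (qf m) (Ioo 0 1) := fun _ hs _ ht hst =>
  (qf_le_iff_le_cdf m hs.1 hs.2).2 <| hst.trans <| (qf_le_iff_le_cdf m ht.1 ht.2).1 le_rfl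

theorem restrict_Ioo_apply_eq_ofReal {A : Set ℝ} {c : ℝ} (hc : c ≤ 1)
    (hA : ∀ s ∈ Ioo (0 : ℝ) 1, s ∈ A ↔ s ≤ c) :
    volume.restrict (Ioo 0 1) A = ENNReal.ofReal c := by
  have hAc : A =ᵐ[volume.restrict (Ioo 0 1)] Iic c :=
    (ae_restrict_iff' measurableSet_Ioo).2 (Eventually.of_forall fun s hs => propext (hA s hs))
  rw [measure_congr hAc, Measure.restrict_congr_set Ioo_ae_eq_Ioc,
    Measure.restrict_apply measurableSet_Iic, inter_comm, Ioc_inter_Iic, Real.volume_Ioc,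
    min_eq_right hc, sub_zero]

theorem restrict_Icc_eq_restrict_Ioo :
    volume.restrict (Icc (0 : ℝ) 1) = volume.restrict (Ioo 0 1) :=
  Measure.restrict_congr_set Ioo_ae_eq_Icc.symm

instance : IsProbabilityMeasure (volume.restrict (Icc (0 : ℝ) 1)) := ⟨by simp⟩

theorem aemeasurable_qf : AEMeasurable (qf m) (volume.restrict (Icc 0 1)) :=
  restrict_Icc_eq_restrict_Ioo ▸ aemeasurable_restrict_of_monotoneOn measurableSet_Ioo
    (monotoneOn_qf m)

theorem map_qf [IsProbabilityMeasure m] : (volume.restrict (Icc 0 1)).map (qf m) = m := by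
  have := Measure.isProbabilityMeasure_map (aemeasurable_qf m)
  refine Measure.ext_of_Iic _ m fun x => ?_
  rw [Measure.map_apply_of_aemeasurable (aemeasurable_qf m) measurableSet_Iic,
    restrict_Icc_eq_restrict_Ioo, ← ofReal_cdf m x]
  exact restrict_Ioo_apply_eq_ofReal (cdf_le_one m x) fun s hs => qf_le_iff_le_cdf m hs.1 hs.2

end Quantile

section Coupling

variable {A B : Type*} [MeasurableSpace A] [MeasurableSpace B] {π : Measure (A × B)}
  {μ : Measure A} {ν : Measure B}

instance isProbabilityMeasure_map_fst (π : Measure (A × B)) [IsProbabilityMeasure π] :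
    IsProbabilityMeasure (π.map Prod.fst) :=
  Measure.isProbabilityMeasure_map measurable_fst.aemeasurable

instance isProbabilityMeasure_map_snd (π : Measure (A × B)) [IsProbabilityMeasure π] :
    IsProbabilityMeasure (π.map Prod.snd) :=
  Measure.isProbabilityMeasure_map measurable_snd.aemeasurable

theorem IsCoupling.isProbabilityMeasure [IsProbabilityMeasure μ] (hπ : IsCoupling π μ ν) :
    IsProbabilityMeasure π :=
  have : IsProbabilityMeasure (π.map Prod.fst) := hπ.1 ▸ ‹_›
  Measure.isProbabilityMeasure_of_map Prod.fst

theorem IsCoupling.measure_prod_le_min (hπ : IsCoupling π μ ν) {s : Set A} {t : Set B}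
    (hs : MeasurableSet s) (ht : MeasurableSet t) : π (s ×ˢ t) ≤ min (μ s) (ν t) := by
  rw [← hπ.1, ← hπ.2, Measure.map_apply measurable_fst hs, Measure.map_apply measurable_snd ht]
  exact le_min (measure_mono fun p hp => hp.1) (measure_mono fun p hp => hp.2)

theorem IsCoupling.measure_prod_add_measure_compl_prod (hπ : IsCoupling π μ ν) {s : Set A}
    {t : Set B} (hs : MeasurableSet s) (ht : MeasurableSet t) :
    π (s ×ˢ t) + π (sᶜ ×ˢ t) = ν t := by
  rw [← measure_union (disjoint_compl_right.set_prod_left t t) (hs.compl.prod ht), ← union_prod,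
    union_compl_self, univ_prod, ← hπ.2, Measure.map_apply measurable_snd ht]

theorem IsCoupling.map_swap (hπ : IsCoupling π μ ν) : IsCoupling (π.map Prod.swap) ν μ :=
  ⟨Measure.fst_map_swap.trans hπ.2, Measure.snd_map_swap.trans hπ.1⟩

theorem IsCoupling.map_prodMap {A' B' : Type*} [MeasurableSpace A'] [MeasurableSpace B']
    (hπ : IsCoupling π μ ν) {f : A → A'} {g : B → B'} (hf : Measurable f) (hg : Measurable g) :
    IsCoupling (π.map (Prod.map f g)) (μ.map f) (ν.map g) := by
  constructor
  · rw [← hπ.1, Measure.map_map measurable_fst (hf.prodMap hg), Measure.map_map hf measurable_fst]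
    rfl
  · rw [← hπ.2, Measure.map_map measurable_snd (hf.prodMap hg), Measure.map_map hg measurable_snd]
    rfl

theorem IsCoupling.Wc_le (hπ : IsCoupling π μ ν) (c : A → B → ℝ≥0∞) :
    Wc c μ ν ≤ ∫⁻ p, c p.1 p.2 ∂π :=
  iInf₂_le π hπ

theorem le_Wc {c : A → B → ℝ≥0∞} {a : ℝ≥0∞}
    (h : ∀ π : Measure (A × B), IsCoupling π μ ν → a ≤ ∫⁻ p, c p.1 p.2 ∂π) : a ≤ Wc c μ ν :=
  le_iInf₂ h

end Coupling

def comonotoneCoupling (m n : Measure ℝ) : Measure (ℝ × ℝ) :=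
  (volume.restrict (Icc 0 1)).map (fun s => (qf m s, qf n s))

section Comonotone

variable (m n : Measure ℝ)

theorem aemeasurable_qf_prodMk :
    AEMeasurable (fun s => (qf m s, qf n s)) (volume.restrict (Icc 0 1)) :=
  (aemeasurable_qf m).prodMk (aemeasurable_qf n)

instance : IsProbabilityMeasure (comonotoneCoupling m n) :=
  Measure.isProbabilityMeasure_map (aemeasurable_qf_prodMk m n)

variable [IsProbabilityMeasure m] [IsProbabilityMeasure n]

theorem isCoupling_comonotoneCoupling : IsCoupling (comonotoneCoupling m n) m n := by
  constructor <;> rw [comonotoneCoupling,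
    AEMeasurable.map_map_of_aemeasurable (by fun_prop) (aemeasurable_qf_prodMk m n)]
  exacts [map_qf m, map_qf n]

theorem comonotoneCoupling_Iic_prod_Iic (r y : ℝ) :
    comonotoneCoupling m n (Iic r ×ˢ Iic y) = min (m (Iic r)) (n (Iic y)) := by
  rw [comonotoneCoupling, Measure.map_apply_of_aemeasurable (aemeasurable_qf_prodMk m n)
    (measurableSet_Iic.prod measurableSet_Iic), restrict_Icc_eq_restrict_Ioo, ← ofReal_cdf,
    ← ofReal_cdf, ← ENNReal.ofReal_min]
  exact restrict_Ioo_apply_eq_ofReal ((min_le_left _ _).trans (cdf_le_one m r)) fun s hs => by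
    simp only [mem_preimage, mem_prod, mem_Iic, le_min_iff, qf_le_iff_le_cdf _ hs.1 hs.2]

variable {m n} {ρ : Measure (ℝ × ℝ)}

theorem comonotoneCoupling_Ioi_prod_Iic_le (hρ : IsCoupling ρ m n) (r y : ℝ) :
    comonotoneCoupling m n (Ioi r ×ˢ Iic y) ≤ ρ (Ioi r ×ˢ Iic y) := by
  have := hρ.isProbabilityMeasure
  have hT := (isCoupling_comonotoneCoupling m n).measure_prod_add_measure_compl_prod
    measurableSet_Iic (measurableSet_Iic (a := y)) (s := Iic r)
  have hρ' := hρ.measure_prod_add_measure_compl_prod measurableSet_Iic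
    (measurableSet_Iic (a := y)) (s := Iic r)
  rw [compl_Iic] at hT hρ'
  have hle : ρ (Iic r ×ˢ Iic y) ≤ comonotoneCoupling m n (Iic r ×ˢ Iic y) :=
    comonotoneCoupling_Iic_prod_Iic m n r y ▸
      hρ.measure_prod_le_min measurableSet_Iic measurableSet_Iic
  rw [← ENNReal.add_le_add_iff_left (measure_ne_top ρ (Iic r ×ˢ Iic y))]
  calc ρ (Iic r ×ˢ Iic y) + comonotoneCoupling m n (Ioi r ×ˢ Iic y)
      ≤ comonotoneCoupling m n (Iic r ×ˢ Iic y) + comonotoneCoupling m n (Ioi r ×ˢ Iic y) := by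
        gcongr
    _ = ρ (Iic r ×ˢ Iic y) + ρ (Ioi r ×ˢ Iic y) := hT.trans hρ'.symm

end Comonotone

-- `(x - y - s)⁺` is the length of `{r | y + s ≤ r < x}`; then swap the integrals.
theorem lintegral_ofReal_sub_sub_eq (θ : Measure (ℝ × ℝ)) [SFinite θ] (s : ℝ) :
    ∫⁻ p, ENNReal.ofReal (p.1 - p.2 - s) ∂θ = ∫⁻ r, θ (Ioi r ×ˢ Iic (r - s)) := by
  have hmem : ∀ (p : ℝ × ℝ) r, p ∈ Ioi r ×ˢ Iic (r - s) ↔ r ∈ Ico (p.2 + s) p.1 := fun p r => by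
    simp only [mem_prod, mem_Ioi, mem_Iic, mem_Ico, le_sub_iff_add_le, and_comm]
  calc ∫⁻ p, ENNReal.ofReal (p.1 - p.2 - s) ∂θ
      = ∫⁻ p, (∫⁻ r, (Ico (p.2 + s) p.1).indicator 1 r) ∂θ := by
        refine lintegral_congr fun p => ?_
        rw [lintegral_indicator_one measurableSet_Ico, Real.volume_Ico, sub_add_eq_sub_sub]
    _ = ∫⁻ r, ∫⁻ p, (Ico (p.2 + s) p.1).indicator (1 : ℝ → ℝ≥0∞) r ∂θ := by
        refine lintegral_lintegral_swap (Measurable.aemeasurable (measurable_const.indicator ?_))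
        exact (measurableSet_le (f := fun q : (ℝ × ℝ) × ℝ => q.1.2 + s) (by fun_prop)
          (by fun_prop)).inter (measurableSet_lt (g := fun q : (ℝ × ℝ) × ℝ => q.1.1) (by fun_prop)
          (by fun_prop))
    _ = ∫⁻ r, θ (Ioi r ×ˢ Iic (r - s)) := by
        refine lintegral_congr fun r => ?_
        rw [← lintegral_indicator_one (measurableSet_Ioi.prod measurableSet_Iic)]
        congr with p
        simp only [indicator_apply, hmem, Pi.one_apply]

theorem lintegral_comonotoneCoupling_ofReal_sub_sub_le {m n : Measure ℝ} [IsProbabilityMeasure m]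
    [IsProbabilityMeasure n] {ρ : Measure (ℝ × ℝ)} (hρ : IsCoupling ρ m n) (s : ℝ) :
    ∫⁻ p, ENNReal.ofReal (p.1 - p.2 - s) ∂comonotoneCoupling m n
      ≤ ∫⁻ p, ENNReal.ofReal (p.1 - p.2 - s) ∂ρ := by
  have := hρ.isProbabilityMeasure
  rw [lintegral_ofReal_sub_sub_eq, lintegral_ofReal_sub_sub_eq]
  exact lintegral_mono fun r => comonotoneCoupling_Ioi_prod_Iic_le hρ r (r - s)

theorem ConvexOn.continuous_of_univ {g : ℝ → ℝ} (hg : ConvexOn ℝ univ g) : Continuous g :=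
  continuousOn_univ.1 (hg.continuousOn isOpen_univ)

section Hinges

variable {g : ℝ → ℝ} {δ : ℝ}

def chordSlope (g : ℝ → ℝ) (δ : ℝ) (j : ℕ) : ℝ := (g ((j + 1) * δ) - g (j * δ)) / δ

def slopeJump (g : ℝ → ℝ) (δ : ℝ) : ℕ → ℝ
  | 0 => chordSlope g δ 0
  | j + 1 => chordSlope g δ (j + 1) - chordSlope g δ j

/-- When `g 0 = 0`, on `[0, ∞)` this is the piecewise linear interpolation of `g` on the grid
`δℕ`. -/
def hingeSum (g : ℝ → ℝ) (δ v : ℝ) : ℝ≥0∞ :=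
  ∑' j : ℕ, ENNReal.ofReal (slopeJump g δ j) * ENNReal.ofReal (v - j * δ)

theorem chordSlope_nonneg (hmono : Monotone g) (hδ : 0 < δ) (j : ℕ) : 0 ≤ chordSlope g δ j :=
  div_nonneg (sub_nonneg.2 (hmono (by nlinarith))) hδ.le

theorem chordSlope_le_succ (hg : ConvexOn ℝ univ g) (hδ : 0 < δ) (j : ℕ) :
    chordSlope g δ j ≤ chordSlope g δ (j + 1) := by
  have h := hg.slope_mono_adjacent (x := j * δ) (y := (j + 1) * δ) (z := (j + 1 + 1) * δ)
    trivial trivial (by nlinarith) (by nlinarith)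
  rw [show ((j : ℝ) + 1) * δ - j * δ = δ by ring,
    show ((j : ℝ) + 1 + 1) * δ - (j + 1) * δ = δ by ring] at h
  simpa only [chordSlope, Nat.cast_add, Nat.cast_one] using h

theorem slopeJump_nonneg (hg : ConvexOn ℝ univ g) (hmono : Monotone g) (hδ : 0 < δ) :
    ∀ j, 0 ≤ slopeJump g δ j
  | 0 => chordSlope_nonneg hmono hδ 0
  | j + 1 => sub_nonneg.2 (chordSlope_le_succ hg hδ j)

theorem sum_range_slopeJump_mul (hg0 : g 0 = 0) (hδ : δ ≠ 0) (v : ℝ) (M : ℕ) :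
    ∑ j ∈ Finset.range (M + 1), slopeJump g δ j * (v - j * δ)
      = g (M * δ) + chordSlope g δ M * (v - M * δ) := by
  induction M with
  | zero => simp [slopeJump, hg0]
  | succ M ih =>
    have hslope : chordSlope g δ M * δ = g ((M + 1) * δ) - g (M * δ) :=
      div_mul_cancel₀ _ hδ
    rw [Finset.sum_range_succ, ih]
    simp only [slopeJump, Nat.cast_add, Nat.cast_one]
    linear_combination hslope

theorem exists_hingeSum_eq (hg : ConvexOn ℝ univ g) (hmono : Monotone g) (hg0 : g 0 = 0)
    (hδ : 0 < δ) {v : ℝ} (hv : 0 ≤ v) : ∃ k : ℕ, k * δ ≤ v ∧ v < (k + 1) * δ ∧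
      hingeSum g δ v = ENNReal.ofReal (g (k * δ) + chordSlope g δ k * (v - k * δ)) := by
  set k := ⌊v / δ⌋₊
  have hk1 : k * δ ≤ v := (le_div_iff₀ hδ).1 (Nat.floor_le (div_nonneg hv hδ.le))
  have hk2 : v < (k + 1) * δ := (div_lt_iff₀ hδ).1 (Nat.lt_floor_add_one _)
  refine ⟨k, hk1, hk2, ?_⟩
  have hvanish : ∀ j ∉ Finset.range (k + 1),
      ENNReal.ofReal (slopeJump g δ j) * ENNReal.ofReal (v - j * δ) = 0 := fun j hj => by
    have : (k : ℝ) + 1 ≤ j := by exact_mod_cast not_lt.1 (Finset.mem_range.not.1 hj)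
    rw [ENNReal.ofReal_of_nonpos (show v - j * δ ≤ 0 by nlinarith), mul_zero]
  have hnonneg : ∀ j ∈ Finset.range (k + 1), 0 ≤ v - j * δ := fun j hj => by
    have : (j : ℝ) ≤ k := by exact_mod_cast Nat.lt_succ_iff.1 (Finset.mem_range.1 hj)
    nlinarith
  rw [hingeSum, tsum_eq_sum hvanish, ← sum_range_slopeJump_mul hg0 hδ.ne',
    ENNReal.ofReal_sum_of_nonneg fun j hj => mul_nonneg (slopeJump_nonneg hg hmono hδ j)
      (hnonneg j hj)]
  exact Finset.sum_congr rfl fun j _ => (ENNReal.ofReal_mul (slopeJump_nonneg hg hmono hδ j)).symm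

theorem hingeSum_le (hg : ConvexOn ℝ univ g) (hmono : Monotone g) (hg0 : g 0 = 0)
    (hδ : 0 < δ) (v : ℝ) : hingeSum g δ v ≤ ENNReal.ofReal (g (v + δ)) := by
  rcases lt_or_ge v 0 with hv | hv
  · refine le_of_eq_of_le (ENNReal.tsum_eq_zero.2 fun j => ?_) zero_le
    rw [ENNReal.ofReal_of_nonpos (show v - j * δ ≤ 0 by nlinarith [j.cast_nonneg (α := ℝ)]),
      mul_zero]
  obtain ⟨k, hk1, hk2, hsum⟩ := exists_hingeSum_eq hg hmono hg0 hδ hv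
  have hslope : chordSlope g δ k * δ = g ((k + 1) * δ) - g (k * δ) := div_mul_cancel₀ _ hδ.ne'
  rw [hsum]
  refine ENNReal.ofReal_le_ofReal ?_
  nlinarith [chordSlope_nonneg hmono hδ k, hmono (show ((k : ℝ) + 1) * δ ≤ v + δ by linarith)]

theorem ofReal_le_hingeSum (hg : ConvexOn ℝ univ g) (hmono : Monotone g) (hg0 : g 0 = 0)
    (hδ : 0 < δ) (v : ℝ) : ENNReal.ofReal (g (v - δ)) ≤ hingeSum g δ v := by
  rcases lt_or_ge v 0 with hv | hv
  · rw [ENNReal.ofReal_of_nonpos (hg0 ▸ hmono (by linarith))]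
    exact zero_le
  obtain ⟨k, hk1, hk2, hsum⟩ := exists_hingeSum_eq hg hmono hg0 hδ hv
  rw [hsum]
  refine ENNReal.ofReal_le_ofReal ?_
  nlinarith [chordSlope_nonneg hmono hδ k, hmono (show v - δ ≤ k * δ by linarith)]

theorem tendsto_hingeSum (hg : ConvexOn ℝ univ g) (hmono : Monotone g) (hg0 : g 0 = 0) (u : ℝ) :
    Tendsto (fun n : ℕ => hingeSum g (1 / (n + 1)) (u - 1 / (n + 1))) atTop
      (𝓝 (ENNReal.ofReal (g u))) := by
  have hδ : ∀ n : ℕ, (0 : ℝ) < 1 / (n + 1) := fun n => by positivity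
  have hlim : Tendsto (fun n : ℕ => u - 1 / (n + 1) - 1 / (n + 1)) atTop (𝓝 u) := by
    simpa using ((tendsto_const_nhds (x := u)).sub tendsto_one_div_add_atTop_nhds_zero_nat).sub
      tendsto_one_div_add_atTop_nhds_zero_nat
  refine tendsto_of_tendsto_of_tendsto_of_le_of_le
    ((ENNReal.continuous_ofReal.tendsto _).comp ((hg.continuous_of_univ.tendsto u).comp hlim))
    tendsto_const_nhds (fun n => ofReal_le_hingeSum hg hmono hg0 (hδ n) _) fun n => ?_
  simpa using hingeSum_le hg hmono hg0 (hδ n) (u - 1 / (n + 1))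

theorem lintegral_hingeSum {α : Type*} [MeasurableSpace α] (θ : Measure α) {f : α → ℝ}
    (hf : Measurable f) : ∫⁻ a, hingeSum g δ (f a) ∂θ
      = ∑' j : ℕ, ENNReal.ofReal (slopeJump g δ j) * ∫⁻ a, ENNReal.ofReal (f a - j * δ) ∂θ := by
  simp only [hingeSum]
  rw [lintegral_tsum fun j => by fun_prop]
  exact tsum_congr fun j => lintegral_const_mul _ (by fun_prop)

end Hinges

section Optimality

variable {m n : Measure ℝ} [IsProbabilityMeasure m] [IsProbabilityMeasure n]
  {ρ : Measure (ℝ × ℝ)}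

theorem lintegral_hingeSum_comonotoneCoupling_le {g : ℝ → ℝ} {δ : ℝ} (hρ : IsCoupling ρ m n)
    (t : ℝ) : ∫⁻ p, hingeSum g δ (p.1 - p.2 - t) ∂comonotoneCoupling m n
      ≤ ∫⁻ p, hingeSum g δ (p.1 - p.2 - t) ∂ρ := by
  rw [lintegral_hingeSum _ (by fun_prop), lintegral_hingeSum _ (by fun_prop)]
  refine ENNReal.tsum_le_tsum fun j => mul_le_mul_right ?_ _
  simpa only [sub_sub, add_assoc] using lintegral_comonotoneCoupling_ofReal_sub_sub_le hρ (t + j * δ)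

/-- Fatou's lemma along the hinge-sum approximations of `g` from below. -/
theorem lintegral_comonotoneCoupling_le_of_monotone {g : ℝ → ℝ} (hg : ConvexOn ℝ univ g)
    (hmono : Monotone g) (hg0 : g 0 = 0) (hρ : IsCoupling ρ m n) :
    ∫⁻ p, ENNReal.ofReal (g (p.1 - p.2)) ∂comonotoneCoupling m n
      ≤ ∫⁻ p, ENNReal.ofReal (g (p.1 - p.2)) ∂ρ := by
  set K : ℕ → ℝ × ℝ → ℝ≥0∞ := fun k p => hingeSum g (1 / (k + 1)) (p.1 - p.2 - 1 / (k + 1))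
  have hK : ∀ k, Measurable (K k) := fun k =>
    Measurable.tsum fun j => by fun_prop
  calc ∫⁻ p, ENNReal.ofReal (g (p.1 - p.2)) ∂comonotoneCoupling m n
      = ∫⁻ p, liminf (fun k => K k p) atTop ∂comonotoneCoupling m n :=
        lintegral_congr fun p => (tendsto_hingeSum hg hmono hg0 (p.1 - p.2)).liminf_eq.symm
    _ ≤ liminf (fun k => ∫⁻ p, K k p ∂comonotoneCoupling m n) atTop := lintegral_liminf_le hK
    _ ≤ liminf (fun k => ∫⁻ p, K k p ∂ρ) atTop :=
        liminf_le_liminf (.of_forall fun k => lintegral_hingeSum_comonotoneCoupling_le hρ _)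
    _ ≤ liminf (fun _ => ∫⁻ p, ENNReal.ofReal (g (p.1 - p.2)) ∂ρ) atTop :=
        liminf_le_liminf (.of_forall fun k => lintegral_mono fun p => by
          simpa [K] using hingeSum_le hg hmono hg0 (Nat.one_div_pos_of_nat (n := k))
            (p.1 - p.2 - 1 / (k + 1)))
    _ = ∫⁻ p, ENNReal.ofReal (g (p.1 - p.2)) ∂ρ := liminf_const _

end Optimality

section AbsCost

variable {h : ℝ → ℝ}

theorem monotoneOn_Ici_of_convexOn (hh : ConvexOn ℝ univ h) (hpos : ∀ t, 0 ≤ h t)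
    (h0 : h 0 = 0) : MonotoneOn h (Ici 0) := by
  intro a (ha : 0 ≤ a) b _ hab
  rcases ha.eq_or_lt with ha0 | ha
  · rw [← ha0, h0]
    exact hpos b
  rcases hab.eq_or_lt with rfl | hab
  · rfl
  exact hh.le_right_of_left_le trivial trivial
    (by rw [openSegment_eq_Ioo (ha.trans hab)]; exact ⟨ha, hab⟩) (h0 ▸ hpos a)

theorem convexOn_comp_max_zero (hh : ConvexOn ℝ univ h) (hpos : ∀ t, 0 ≤ h t) (h0 : h 0 = 0) :
    ConvexOn ℝ univ fun t => h (max t 0) := by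
  have himg : (fun t : ℝ => max t 0) '' univ = Ici 0 := by
    ext x
    simp only [image_univ, mem_range, mem_Ici]
    exact ⟨fun ⟨t, ht⟩ => ht ▸ le_max_right t 0, fun hx => ⟨x, max_eq_left hx⟩⟩
  refine (hh.subset (subset_univ _) (himg ▸ convex_Ici 0)).comp
    ((convexOn_id convex_univ).sup (convexOn_const 0 convex_univ)) ?_
  exact himg ▸ monotoneOn_Ici_of_convexOn hh hpos h0

theorem ofReal_abs_sub_eq_add (h0 : h 0 = 0) (x y : ℝ) :
    ENNReal.ofReal (h |x - y|)
      = ENNReal.ofReal (h (max (x - y) 0)) + ENNReal.ofReal (h (max (y - x) 0)) := by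
  rcases le_total y x with hxy | hxy
  · rw [abs_of_nonneg (sub_nonneg.2 hxy), max_eq_left (sub_nonneg.2 hxy),
      max_eq_right (sub_nonpos.2 hxy), h0, ENNReal.ofReal_zero, add_zero]
  · rw [abs_of_nonpos (sub_nonpos.2 hxy), neg_sub, max_eq_left (sub_nonneg.2 hxy),
      max_eq_right (sub_nonpos.2 hxy), h0, ENNReal.ofReal_zero, zero_add]

theorem comonotoneCoupling_map_swap (m n : Measure ℝ) :
    (comonotoneCoupling m n).map Prod.swap = comonotoneCoupling n m :=
  AEMeasurable.map_map_of_aemeasurable measurable_swap.aemeasurable (aemeasurable_qf_prodMk m n)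

variable {m n : Measure ℝ} [IsProbabilityMeasure m] [IsProbabilityMeasure n]
  {ρ : Measure (ℝ × ℝ)}

/-- `h |x - y| = h (x - y)⁺ + h (y - x)⁺`, two convex nondecreasing costs, the second of which
becomes the first after swapping the coordinates. -/
theorem lintegral_comonotoneCoupling_le (hh : ConvexOn ℝ univ h) (hpos : ∀ t, 0 ≤ h t)
    (h0 : h 0 = 0) (hρ : IsCoupling ρ m n) :
    ∫⁻ p, ENNReal.ofReal (h |p.1 - p.2|) ∂comonotoneCoupling m n
      ≤ ∫⁻ p, ENNReal.ofReal (h |p.1 - p.2|) ∂ρ := by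
  have hg := convexOn_comp_max_zero hh hpos h0
  have hmono : Monotone fun t => h (max t 0) := fun a b hab =>
    monotoneOn_Ici_of_convexOn hh hpos h0 (le_max_right a 0) (le_max_right b 0)
      (max_le_max_right 0 hab)
  have hg0 : h (max 0 0) = 0 := by rw [max_self, h0]
  have hsplit : ∀ θ : Measure (ℝ × ℝ), ∫⁻ p, ENNReal.ofReal (h |p.1 - p.2|) ∂θ
      = ∫⁻ p, ENNReal.ofReal (h (max (p.1 - p.2) 0)) ∂θ
        + ∫⁻ p, ENNReal.ofReal (h (max (p.1 - p.2) 0)) ∂θ.map Prod.swap := fun θ => by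
    have hmeas : Measurable fun p : ℝ × ℝ => ENNReal.ofReal (h (max (p.1 - p.2) 0)) :=
      (hg.continuous_of_univ.measurable.comp (by fun_prop)).ennreal_ofReal
    rw [lintegral_map hmeas measurable_swap, ← lintegral_add_left hmeas]
    exact lintegral_congr fun p => ofReal_abs_sub_eq_add h0 p.1 p.2
  rw [hsplit, hsplit, comonotoneCoupling_map_swap]
  exact add_le_add (lintegral_comonotoneCoupling_le_of_monotone hg hmono hg0 hρ)
    (lintegral_comonotoneCoupling_le_of_monotone hg hmono hg0 hρ.map_swap)

theorem Wc_eq_lintegral_comonotoneCoupling (hh : ConvexOn ℝ univ h) (hpos : ∀ t, 0 ≤ h t)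
    (h0 : h 0 = 0) : Wc (fun a b => ENNReal.ofReal (h |a - b|)) m n
      = ∫⁻ p, ENNReal.ofReal (h |p.1 - p.2|) ∂comonotoneCoupling m n :=
  le_antisymm ((isCoupling_comonotoneCoupling m n).Wc_le _)
    (le_Wc fun _ hρ => lintegral_comonotoneCoupling_le hh hpos h0 hρ)

theorem ConvexOn.measurable_uncurry_ofReal_abs_sub (hh : ConvexOn ℝ univ h) :
    Measurable (Function.uncurry fun a b : ℝ => ENNReal.ofReal (h |a - b|)) := by
  have hcont := hh.continuous_of_univ
  fun_prop

end AbsCost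

theorem Measure.map_prodMap_compProd_comap {α β γ : Type*} [MeasurableSpace α]
    [MeasurableSpace β] [MeasurableSpace γ] (ρ : Measure α) [SFinite ρ] (κ : Kernel β γ)
    [IsSFiniteKernel κ] {φ : α → β} (hφ : Measurable φ) :
    (ρ ⊗ₘ κ.comap φ hφ).map (Prod.map φ id) = ρ.map φ ⊗ₘ κ := by
  ext s hs
  rw [Measure.map_apply (hφ.prodMap measurable_id) hs,
    Measure.compProd_apply (hφ.prodMap measurable_id hs), Measure.compProd_apply hs,
    lintegral_map (Kernel.measurable_kernel_prodMk_left hs) hφ]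
  rfl

section CardinalFlow

variable {μ : Measure (X₁ × X₂)} {ν : Measure (Y₁ × Y₂)} {c₁ : X₁ → Y₁ → ℝ≥0∞}
  {c₂ : X₂ → Y₂ → ℝ≥0∞} {F : Measure ((X₁ × X₂) × Y₁) × Measure (X₂ × (Y₁ × Y₂))}

theorem Wc_add_Wc_le_CT (hF : F ∈ Flows μ ν) :
    Wc c₁ (μ.map Prod.fst) (ν.map Prod.fst) + Wc c₂ (μ.map Prod.snd) (ν.map Prod.snd)
      ≤ CT c₁ c₂ F := by
  obtain ⟨-, -, h1, h2, hglue⟩ := hF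
  have hc₁ : IsCoupling (F.1.map fun q => (q.1.1, q.2)) (μ.map Prod.fst) (ν.map Prod.fst) := by
    constructor
    · rw [← h1, Measure.map_map measurable_fst (by fun_prop),
        Measure.map_map measurable_fst measurable_fst]
      rfl
    · rw [← h2, Measure.map_map measurable_snd (by fun_prop),
        Measure.map_map measurable_fst measurable_snd,
        show (Prod.snd ∘ fun q : (X₁ × X₂) × Y₁ => (q.1.1, q.2))
          = Prod.fst ∘ fun q => (q.2, q.1.2) from rfl,
        ← Measure.map_map measurable_fst (by fun_prop), hglue,
        Measure.map_map measurable_fst (by fun_prop)]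
      rfl
  have hc₂ : IsCoupling (F.2.map fun q => (q.1, q.2.2)) (μ.map Prod.snd) (ν.map Prod.snd) := by
    constructor
    · rw [← h1, Measure.map_map measurable_fst (by fun_prop),
        Measure.map_map measurable_snd measurable_fst,
        show (Prod.snd ∘ Prod.fst : (X₁ × X₂) × Y₁ → X₂) = Prod.snd ∘ fun q => (q.2, q.1.2)
          from rfl,
        ← Measure.map_map measurable_snd (by fun_prop), hglue,
        Measure.map_map measurable_snd (by fun_prop)]
      rfl
    · rw [← h2, Measure.map_map measurable_snd (by fun_prop),
        Measure.map_map measurable_snd measurable_snd]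
      rfl
  exact add_le_add ((hc₁.Wc_le c₁).trans (lintegral_map_le _ _))
    ((hc₂.Wc_le c₂).trans (lintegral_map_le _ _))

/-- Glue `F.1` with the disintegration of `F.2` over their common marginal on `Y₁ × X₂`. -/
theorem exists_gluing_of_mem_Flows [StandardBorelSpace Y₂] [Nonempty Y₂] (hF : F ∈ Flows μ ν) :
    ∃ γ : Measure ((X₁ × X₂) × (Y₁ × Y₂)),
      γ.map (fun p => (p.1, p.2.1)) = F.1 ∧ γ.map (fun p => (p.1.2, p.2)) = F.2 := by
  obtain ⟨hF1, hF2, -, -, hglue⟩ := hF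
  set ψ : (X₁ × X₂) × Y₁ → Y₁ × X₂ := fun q => (q.2, q.1.2)
  set f2' : Measure ((Y₁ × X₂) × Y₂) := F.2.map fun p => ((p.2.1, p.1), p.2.2)
  have : IsFiniteMeasure f2' := Measure.isFiniteMeasure_map _ _
  set γ₀ := F.1 ⊗ₘ f2'.condKernel.comap ψ (by fun_prop)
  have hγ₀ : γ₀.map (Prod.map ψ id) = f2' := by
    rw [Measure.map_prodMap_compProd_comap, hglue]
    convert f2'.disintegrate f2'.condKernel using 2
    rw [Measure.fst, Measure.map_map measurable_fst (by fun_prop)]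
    rfl
  refine ⟨γ₀.map fun q => (q.1.1, (q.1.2, q.2)), ?_, ?_⟩
  · rw [Measure.map_map (by fun_prop) (by fun_prop)]
    exact Measure.fst_compProd _ _
  · rw [Measure.map_map (by fun_prop) (by fun_prop),
      show ((fun p : (X₁ × X₂) × (Y₁ × Y₂) => (p.1.2, p.2)) ∘
          fun q : ((X₁ × X₂) × Y₁) × Y₂ => (q.1.1, (q.1.2, q.2)))
        = (fun r : (Y₁ × X₂) × Y₂ => (r.1.2, (r.1.1, r.2))) ∘ Prod.map ψ id from rfl,
      ← Measure.map_map (by fun_prop) (by fun_prop), hγ₀, Measure.map_map (by fun_prop)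
        (by fun_prop)]
    exact Measure.map_id

theorem Wc_le_CT [StandardBorelSpace Y₂] [Nonempty Y₂] (hc₁ : Measurable (Function.uncurry c₁))
    (hc₂ : Measurable (Function.uncurry c₂)) (hF : F ∈ Flows μ ν) :
    Wc (fun x y => c₁ x.1 y.1 + c₂ x.2 y.2) μ ν ≤ CT c₁ c₂ F := by
  obtain ⟨γ, hγ₁, hγ₂⟩ := exists_gluing_of_mem_Flows hF
  have hγ : IsCoupling γ μ ν := by
    constructor
    · rw [← hF.2.2.1, ← hγ₁, Measure.map_map measurable_fst (by fun_prop)]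
      rfl
    · rw [← hF.2.2.2.1, ← hγ₂, Measure.map_map measurable_snd (by fun_prop)]
      rfl
  refine (hγ.Wc_le _).trans_eq ?_
  rw [CT, ← hγ₁, ← hγ₂, lintegral_map (by fun_prop) (by fun_prop),
    lintegral_map (by fun_prop) (by fun_prop), ← lintegral_add_left (by fun_prop)]

theorem Wc_add_Wc_le_Wc :
    Wc c₁ (μ.map Prod.fst) (ν.map Prod.fst) + Wc c₂ (μ.map Prod.snd) (ν.map Prod.snd)
      ≤ Wc (fun x y => c₁ x.1 y.1 + c₂ x.2 y.2) μ ν := by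
  refine le_Wc fun π hπ => le_trans ?_ (le_lintegral_add _ _)
  exact add_le_add
    (((hπ.map_prodMap measurable_fst measurable_fst).Wc_le c₁).trans (lintegral_map_le _ _))
    (((hπ.map_prodMap measurable_snd measurable_snd).Wc_le c₂).trans (lintegral_map_le _ _))

end CardinalFlow

section DiracMarginal

variable {A B : Type*} [MeasurableSpace A] [MeasurableSpace B]

theorem map_fst_map_prodMk_of_ae_snd_eq {μ : Measure (A × B)} {b : B}
    (hμ : ∀ᵐ p ∂μ, p.2 = b) : (μ.map Prod.fst).map (fun a => (a, b)) = μ := by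
  rw [Measure.map_map (by fun_prop) measurable_fst]
  conv_rhs => rw [← Measure.map_id (μ := μ)]
  exact Measure.map_congr (hμ.mono fun p hp => Prod.ext rfl hp.symm)

theorem map_snd_eq_dirac_of_ae_snd_eq {μ : Measure (A × B)} [IsProbabilityMeasure μ] {b : B}
    (hμ : ∀ᵐ p ∂μ, p.2 = b) : μ.map Prod.snd = Measure.dirac b := by
  rw [Measure.map_congr hμ, Measure.map_const, measure_univ, one_smul]

theorem Wc_dirac_left [MeasurableSingletonClass A] {c : A → B → ℝ≥0∞}
    (hc : Measurable (Function.uncurry c)) (a : A) (n : Measure B) [IsProbabilityMeasure n] :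
    Wc c (Measure.dirac a) n = ∫⁻ y, c a y ∂n := by
  refine le_antisymm ?_ (le_Wc fun π hπ => ?_)
  · have hπ : IsCoupling (n.map (Prod.mk a)) (Measure.dirac a) n := by
      constructor
      · rw [Measure.map_map measurable_fst measurable_prodMk_left]
        simp [Function.comp_def, Measure.map_const]
      · rw [Measure.map_map measurable_snd measurable_prodMk_left]
        exact Measure.map_id
    exact (hπ.Wc_le c).trans_eq (lintegral_map hc measurable_prodMk_left)
  · have hae : ∀ᵐ p ∂π, p.1 = a :=
      ae_of_ae_map measurable_fst.aemeasurable (p := (· = a))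
        (by rw [hπ.1, ae_dirac_eq]; exact eventually_pure.2 rfl)
    rw [← hπ.2, lintegral_map hc.of_uncurry_left measurable_snd]
    exact (lintegral_congr_ae (hae.mono fun p hp => by rw [hp])).le

theorem Wc_dirac_map_snd_compProd [MeasurableSingletonClass A] {c : A → B → ℝ≥0∞}
    (hc : Measurable (Function.uncurry c)) (a : A) {X : Type*} [MeasurableSpace X]
    (ν₁ : Measure X) [IsProbabilityMeasure ν₁] (κ : Kernel X B) [IsMarkovKernel κ] :
    Wc c (Measure.dirac a) ((ν₁ ⊗ₘ κ).map Prod.snd) = ∫⁻ x, Wc c (Measure.dirac a) (κ x) ∂ν₁ := by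
  simp_rw [Wc_dirac_left hc]
  rw [lintegral_map hc.of_uncurry_left measurable_snd]
  exact Measure.lintegral_compProd (f := fun p => c a p.2) (hc.of_uncurry_left.comp measurable_snd)

end DiracMarginal

section AxisFlow

variable {μ ν : Measure (ℝ × ℝ)} [IsProbabilityMeasure μ] [IsProbabilityMeasure ν]

theorem axisFlow_mem_Flows (hμ : ∀ᵐ p ∂μ, p.2 = 0) :
    ((comonotoneCoupling (μ.map Prod.fst) (ν.map Prod.fst)).map fun p => ((p.1, (0 : ℝ)), p.2),
      ν.map fun p => ((0 : ℝ), p)) ∈ Flows μ ν := by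
  have hcoup := isCoupling_comonotoneCoupling (μ.map Prod.fst) (ν.map Prod.fst)
  refine ⟨Measure.isProbabilityMeasure_map (by fun_prop),
    Measure.isProbabilityMeasure_map (by fun_prop), ?_, ?_, ?_⟩
  · rw [Measure.map_map measurable_fst (by fun_prop),
      show (Prod.fst ∘ fun p : ℝ × ℝ => ((p.1, (0 : ℝ)), p.2)) = (fun x => (x, 0)) ∘ Prod.fst
        from rfl, ← Measure.map_map (by fun_prop) measurable_fst, hcoup.1,
      map_fst_map_prodMk_of_ae_snd_eq hμ]
  · rw [Measure.map_map measurable_snd (by fun_prop)]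
    exact Measure.map_id
  · rw [Measure.map_map (by fun_prop) (by fun_prop), Measure.map_map (by fun_prop) (by fun_prop),
      show ((fun p : (ℝ × ℝ) × ℝ => (p.2, p.1.2)) ∘ fun p : ℝ × ℝ => ((p.1, (0 : ℝ)), p.2))
        = (fun y => (y, 0)) ∘ Prod.snd from rfl,
      show ((fun p : ℝ × ℝ × ℝ => (p.2.1, p.1)) ∘ fun p : ℝ × ℝ => ((0 : ℝ), p))
        = (fun y => (y, 0)) ∘ Prod.fst from rfl,
      ← Measure.map_map (by fun_prop) measurable_snd, ← Measure.map_map (by fun_prop) measurable_fst,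
      hcoup.2]

theorem CT_axisFlow {h : ℝ → ℝ} (hh : ConvexOn ℝ univ h) (hpos : ∀ t, 0 ≤ h t) (h0 : h 0 = 0)
    (hμ : ∀ᵐ p ∂μ, p.2 = 0) :
    letI c : ℝ → ℝ → ℝ≥0∞ := fun a b => ENNReal.ofReal (h |a - b|)
    CT c c ((comonotoneCoupling (μ.map Prod.fst) (ν.map Prod.fst)).map
        (fun p => ((p.1, (0 : ℝ)), p.2)), ν.map fun p => ((0 : ℝ), p))
      = Wc c (μ.map Prod.fst) (ν.map Prod.fst) + Wc c (μ.map Prod.snd) (ν.map Prod.snd) := by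
  have hc := hh.measurable_uncurry_ofReal_abs_sub
  have hcont := hh.continuous_of_univ
  rw [Wc_eq_lintegral_comonotoneCoupling hh hpos h0, map_snd_eq_dirac_of_ae_snd_eq hμ,
    Wc_dirac_left hc, CT, lintegral_map (by fun_prop) (by fun_prop),
    lintegral_map (by fun_prop) (by fun_prop), lintegral_map hc.of_uncurry_left measurable_snd]

end AxisFlow

theorem stmt17 (μ ν : Measure (ℝ × ℝ)) [IsProbabilityMeasure μ] [IsProbabilityMeasure ν]
    (h : ℝ → ℝ) (hconv : StrictConvexOn ℝ Set.univ h) (hpos : ∀ t, 0 ≤ h t) (h0 : h 0 = 0)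
    (hμ : μ {p : ℝ × ℝ | p.2 = 0} = 1)
    -- conditional law of the second coordinate of ν given the first:
    (κν : Kernel ℝ ℝ) [IsMarkovKernel κν]
    (hκν : ν = (ν.map Prod.fst) ⊗ₘ κν) :
    letI c₁ : ℝ → ℝ → ℝ≥0∞ := fun a b => ENNReal.ofReal (h |a - b|)
    letI f1 : Measure ((ℝ × ℝ) × ℝ) :=
      ((volume.restrict (Set.Icc (0 : ℝ) 1)).map
          (fun s => (qf (μ.map Prod.fst) s, qf (ν.map Prod.fst) s))).map
        (fun p : ℝ × ℝ => ((p.1, (0 : ℝ)), p.2))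
    letI f2 : Measure (ℝ × (ℝ × ℝ)) :=
      ((ν.map Prod.fst) ⊗ₘ κν).map (fun p : ℝ × ℝ => ((0 : ℝ), p))
    -- (f1, f2) is the optimal cardinal flow
    ((f1, f2) ∈ Flows μ ν ∧ CT c₁ c₁ (f1, f2) = ⨅ G ∈ Flows μ ν, CT c₁ c₁ G) ∧
    -- and the Wasserstein cost decomposes
    Wc (fun x y : ℝ × ℝ => c₁ x.1 y.1 + c₁ x.2 y.2) μ ν
      = Wc c₁ (μ.map Prod.fst) (ν.map Prod.fst)
        + ∫⁻ y₁, Wc c₁ (Measure.dirac (0 : ℝ)) (κν y₁) ∂(ν.map Prod.fst) := by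
  have hμ0 : ∀ᵐ p ∂μ, p.2 = 0 :=
    (mem_ae_iff_prob_eq_one (measurableSet_eq_fun measurable_snd measurable_const)).2 hμ
  have hc := hconv.convexOn.measurable_uncurry_ofReal_abs_sub
  have hW₂ := Wc_dirac_map_snd_compProd hc 0 (ν.map Prod.fst) κν
  rw [← hκν] at hW₂
  have hflow := axisFlow_mem_Flows (ν := ν) hμ0
  have hCT := CT_axisFlow (ν := ν) hconv.convexOn hpos h0 hμ0
  rw [← hκν, ← hW₂, ← map_snd_eq_dirac_of_ae_snd_eq hμ0]
  exact ⟨⟨hflow, le_antisymm (le_iInf₂ fun G hG => hCT ▸ Wc_add_Wc_le_CT hG) (iInf₂_le _ hflow)⟩,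
    le_antisymm ((Wc_le_CT hc hc hflow).trans_eq hCT) Wc_add_Wc_le_Wc⟩
end
end

section
/- For μ, ν ∈ P₂(ℝ²) and the squared Euclidean cost c(x,y) = |x₁−y₁|² + |x₂−y₂|², if μ is supported on a line {ax₁ + bx₂ = q} (with (a,b) ≠ (0,0)), then π_O := (O,O)_# π is an optimal transportation plan between μ and ν, where O is a rotation-translation (isometry) sending {x₂ = 0} onto the line, and π is the optimal plan between O⁻¹_# μ and O⁻¹_# ν given by the explicit formula for measures supported on {x₂ = 0}. -/
open MeasureTheory ProbabilityTheory
open scoped ENNReal ProbabilityTheory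

noncomputable section

variable {X₁ X₂ Y₁ Y₂ : Type*} [MeasurableSpace X₁] [MeasurableSpace X₂]
  [MeasurableSpace Y₁] [MeasurableSpace Y₂]

/-- The squared Euclidean cost on `ℝ²`. -/
noncomputable def sqCost : (ℝ × ℝ) → (ℝ × ℝ) → ℝ≥0∞ :=
  fun x y => ENNReal.ofReal ((x.1 - y.1) ^ 2 + (x.2 - y.2) ^ 2)


lemma sqCost_meas : Measurable (fun p : (ℝ × ℝ) × (ℝ × ℝ) => sqCost p.1 p.2) := by
  unfold sqCost
  exact ENNReal.measurable_ofReal.comp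
    (((measurable_fst.fst.sub measurable_snd.fst).pow_const 2).add
      ((measurable_fst.snd.sub measurable_snd.snd).pow_const 2))

lemma coupling_map (e : (ℝ × ℝ) ≃ᵐ (ℝ × ℝ)) {ρ : Measure ((ℝ × ℝ) × (ℝ × ℝ))}
    {μ ν : Measure (ℝ × ℝ)} (h : IsCoupling ρ μ ν) :
    IsCoupling (ρ.map (fun p => (e p.1, e p.2))) (μ.map e) (ν.map e) := by
  have hg : Measurable (fun p : (ℝ × ℝ) × (ℝ × ℝ) => (e p.1, e p.2)) :=
    (e.measurable.comp measurable_fst).prodMk (e.measurable.comp measurable_snd)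
  constructor
  · rw [Measure.map_map measurable_fst hg]
    have : (Prod.fst ∘ fun p : (ℝ × ℝ) × (ℝ × ℝ) => (e p.1, e p.2)) = e ∘ Prod.fst := rfl
    rw [this, ← Measure.map_map e.measurable measurable_fst, h.1]
  · rw [Measure.map_map measurable_snd hg]
    have : (Prod.snd ∘ fun p : (ℝ × ℝ) × (ℝ × ℝ) => (e p.1, e p.2)) = e ∘ Prod.snd := rfl
    rw [this, ← Measure.map_map e.measurable measurable_snd, h.2]

lemma cost_map (e : (ℝ × ℝ) ≃ᵐ (ℝ × ℝ)) (he : ∀ x y, sqCost (e x) (e y) = sqCost x y)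
    (ρ : Measure ((ℝ × ℝ) × (ℝ × ℝ))) :
    ∫⁻ p, sqCost p.1 p.2 ∂(ρ.map (fun p => (e p.1, e p.2))) = ∫⁻ p, sqCost p.1 p.2 ∂ρ := by
  have hg : Measurable (fun p : (ℝ × ℝ) × (ℝ × ℝ) => (e p.1, e p.2)) :=
    (e.measurable.comp measurable_fst).prodMk (e.measurable.comp measurable_snd)
  rw [lintegral_map sqCost_meas hg]
  simp only [he]

lemma Wc_map_le (e : (ℝ × ℝ) ≃ᵐ (ℝ × ℝ)) (he : ∀ x y, sqCost (e x) (e y) = sqCost x y)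
    (μ ν : Measure (ℝ × ℝ)) :
    Wc sqCost (μ.map e) (ν.map e) ≤ Wc sqCost μ ν := by
  refine le_iInf₂ fun ρ hρ => ?_
  calc Wc sqCost (μ.map e) (ν.map e)
      ≤ ∫⁻ p, sqCost p.1 p.2 ∂(ρ.map (fun p => (e p.1, e p.2))) :=
        iInf₂_le (ρ.map (fun p => (e p.1, e p.2))) (coupling_map e hρ)
    _ = ∫⁻ p, sqCost p.1 p.2 ∂ρ := cost_map e he ρ

lemma Wc_map_eq (e : (ℝ × ℝ) ≃ᵐ (ℝ × ℝ)) (he : ∀ x y, sqCost (e x) (e y) = sqCost x y)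
    (μ ν : Measure (ℝ × ℝ)) :
    Wc sqCost (μ.map e) (ν.map e) = Wc sqCost μ ν := by
  have he' : ∀ x y, sqCost (e.symm x) (e.symm y) = sqCost x y := fun x y => by
    rw [← he (e.symm x) (e.symm y), e.apply_symm_apply, e.apply_symm_apply]
  refine le_antisymm (Wc_map_le e he μ ν) ?_
  have := Wc_map_le e.symm he' (μ.map e) (ν.map e)
  rwa [Measure.map_map e.symm.measurable e.measurable, e.symm_comp_self, Measure.map_id,
    Measure.map_map e.symm.measurable e.measurable, e.symm_comp_self, Measure.map_id] at this

theorem stmt18 (μ ν : Measure (ℝ × ℝ)) [IsProbabilityMeasure μ] [IsProbabilityMeasure ν]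
    -- finite second moments:
    (hμ2 : ∫⁻ x, ENNReal.ofReal (x.1 ^ 2 + x.2 ^ 2) ∂μ ≠ ⊤)
    (hν2 : ∫⁻ x, ENNReal.ofReal (x.1 ^ 2 + x.2 ^ 2) ∂ν ≠ ⊤)
    -- μ is supported on the line {a x₁ + b x₂ = q}:
    (a b q : ℝ) (hab : (a, b) ≠ (0, 0))
    (hline : μ {p : ℝ × ℝ | a * p.1 + b * p.2 = q} = 1)
    -- O is an isometry for the Euclidean cost sending {x₂ = 0} onto the line:
    (O : (ℝ × ℝ) ≃ᵐ (ℝ × ℝ))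
    (hiso : ∀ x y : ℝ × ℝ, sqCost (O x) (O y) = sqCost x y)
    (hOline : O '' {p : ℝ × ℝ | p.2 = 0} = {p : ℝ × ℝ | a * p.1 + b * p.2 = q})
    -- π is the optimal plan between O⁻¹_# μ and O⁻¹_# ν:
    (π : Measure ((ℝ × ℝ) × (ℝ × ℝ)))
    (hπ : IsCoupling π (μ.map O.symm) (ν.map O.symm))
    (hπopt : ∫⁻ p, sqCost p.1 p.2 ∂π = Wc sqCost (μ.map O.symm) (ν.map O.symm)) :
    IsCoupling (π.map (fun p => (O p.1, O p.2))) μ ν ∧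
    ∫⁻ p, sqCost p.1 p.2 ∂(π.map (fun p => (O p.1, O p.2))) = Wc sqCost μ ν := by
  have hcoup := coupling_map O hπ
  rw [Measure.map_map O.measurable O.symm.measurable, O.self_comp_symm, Measure.map_id,
    Measure.map_map O.measurable O.symm.measurable, O.self_comp_symm, Measure.map_id] at hcoup
  refine ⟨hcoup, ?_⟩
  rw [cost_map O hiso π, hπopt, Wc_map_eq O.symm (fun x y => by
    rw [← hiso (O.symm x) (O.symm y), O.apply_symm_apply, O.apply_symm_apply]) μ ν]
end
end
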